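/- arXiv:2406.10793 — 11 statements merged into one kernel-verified Lean document; each statement's English description precedes it below -/
import Mathlib

section
/- Under the SFBS iteration, fix a solution z* (i.e. −F(z*) ∈ G(z*)) and define the Lyapunov function E(k) = [Dk²/(2L) + ρDk(k−r)]·‖F(z_k) + G̃_k‖² + Drk·⟨F(z_k) + G̃_k, z_k − u_k⟩ + ((r³ − r²)/2)·‖u_k − z*‖². Then for all integers k ≥ 0, E(k+1) − E(k) ≤ −(D/2)·[(r−1)(1/L + 2ρ) − D]·(2k + r + 1)·‖F(z_{k+1}) + G̃_{k+1}‖² ≤ 0; in particular the sequence (E(k)) is non-increasing. -/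
open RealInnerProductSpace Filter

set_option maxHeartbeats 4000000 in
/-- The Lyapunov function of the SFBS method is non-increasing, with quantitative decrease. -/
theorem sfbs_lyapunov_decrease
    {H : Type*} [NormedAddCommGroup H] [InnerProductSpace ℝ H] [CompleteSpace H]
    (L ρ r D : ℝ) (F : H → H) (G : H → Set H)
    (z zh zt u Gt : ℕ → H)
    (hL : 0 < L) (hρ : -1/(2*L) < ρ)
    (hLip : ∀ x y : H, ‖F x - F y‖ ≤ L * ‖x - y‖)
    (hcomono : ∀ x y g h : H, g ∈ G x → h ∈ G y →
      ρ * ‖(F x + g) - (F y + h)‖^2 ≤ ⟪(F x + g) - (F y + h), x - y⟫)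
    (hr : 1 < r) (hD0 : 0 < D) (hD : D ≤ (r - 1) * (1/L + 2*ρ))
    (hu0 : u 0 = z 0) (hG0 : Gt 0 ∈ G (z 0))
    (hzt : ∀ k : ℕ, zt (k+1) = ((k : ℝ)/((k : ℝ) + r)) • z k + (r/((k : ℝ) + r)) • u k)
    (hzh : ∀ k : ℕ, zh k =
      zt (k+1) - ((k : ℝ)/((k : ℝ) + r) * (1/L + 2*ρ)) • (F (z k) + Gt k))
    (hz : ∀ k : ℕ, z (k+1) = zt (k+1) - (1/L) • (F (zh k) + Gt (k+1))
        - ((2*ρ*(k : ℝ))/((k : ℝ) + r)) • (F (z k) + Gt k))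
    (hGt : ∀ k : ℕ, Gt (k+1) ∈ G (z (k+1)))
    (hu : ∀ k : ℕ, u (k+1) = u k - (D/r) • (F (z (k+1)) + Gt (k+1)))
    (zs : H) (hzs : -F zs ∈ G zs)
    (E : ℕ → ℝ)
    (hE : ∀ k : ℕ, E k =
      (D*(k : ℝ)^2/(2*L) + ρ*D*(k : ℝ)*((k : ℝ) - r)) * ‖F (z k) + Gt k‖^2
        + D*r*(k : ℝ) * ⟪F (z k) + Gt k, z k - u k⟫
        + (r^3 - r^2)/2 * ‖u k - zs‖^2) :
    ∀ k : ℕ,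
      (E (k+1) - E k ≤
        -(D/2) * ((r-1)*(1/L + 2*ρ) - D) * (2*(k : ℝ) + r + 1)
          * ‖F (z (k+1)) + Gt (k+1)‖^2) ∧
      (-(D/2) * ((r-1)*(1/L + 2*ρ) - D) * (2*(k : ℝ) + r + 1)
          * ‖F (z (k+1)) + Gt (k+1)‖^2 ≤ 0) ∧
      E (k+1) ≤ E k := by
  have hGmem : ∀ k : ℕ, Gt k ∈ G (z k) := by
    intro k; cases k with
    | zero => exact hG0
    | succ n => exact hGt n
  intro k
  have hLne : L ≠ 0 := ne_of_gt hL
  have hr0 : (0:ℝ) < r := lt_trans one_pos hr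
  have hrne : r ≠ 0 := ne_of_gt hr0
  have hk0 : (0:ℝ) ≤ (k:ℝ) := Nat.cast_nonneg k
  have hs0 : (0:ℝ) < (k:ℝ) + r := by linarith
  have hsne : (k:ℝ) + r ≠ 0 := ne_of_gt hs0
  -- formula for z (k+1)
  have hz1 : z (k+1) = ((k : ℝ)/((k : ℝ) + r)) • z k + (r/((k : ℝ) + r)) • u k
      - (1/L) • (F (zh k) + Gt (k+1))
      - ((2*ρ*(k : ℝ))/((k : ℝ) + r)) • (F (z k) + Gt k) := by
    rw [hz k, hzt k]
  -- comonotonicity between z (k+1) and z k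
  have hX1 : ρ * ‖(F (z (k+1)) + Gt (k+1)) - (F (z k) + Gt k)‖^2
      ≤ ⟪(F (z (k+1)) + Gt (k+1)) - (F (z k) + Gt k), z (k+1) - z k⟫ :=
    hcomono (z (k+1)) (z k) (Gt (k+1)) (Gt k) (hGt k) (hGmem k)
  -- comonotonicity between z (k+1) and the solution
  have hX2 : ρ * ‖F (z (k+1)) + Gt (k+1)‖^2
      ≤ ⟪F (z (k+1)) + Gt (k+1), z (k+1) - zs⟫ := by
    have h := hcomono (z (k+1)) zs (Gt (k+1)) (-F zs) (hGt k) hzs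
    simpa using h
  -- Lipschitz inequality
  have hX3 : ‖(F (z (k+1)) + Gt (k+1)) - (F (zh k) + Gt (k+1))‖^2
      ≤ ‖((k : ℝ)/((k : ℝ) + r)) • (F (z k) + Gt k) - (F (zh k) + Gt (k+1))‖^2 := by
    have hv5 : z (k+1) - zh k
        = (1/L) • (((k : ℝ)/((k : ℝ) + r)) • (F (z k) + Gt k) - (F (zh k) + Gt (k+1))) := by
      rw [hz k, hzh k]
      match_scalars <;> field_simp <;> ring
    have h2 := hLip (z (k+1)) (zh k)
    rw [hv5, norm_smul] at h2
    have hnn : ‖(F (z (k+1)) + Gt (k+1)) - (F (zh k) + Gt (k+1))‖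
        ≤ ‖((k : ℝ)/((k : ℝ) + r)) • (F (z k) + Gt k) - (F (zh k) + Gt (k+1))‖ := by
      have heq : (F (z (k+1)) + Gt (k+1)) - (F (zh k) + Gt (k+1)) = F (z (k+1)) - F (zh k) := by
        abel
      rw [heq]
      calc ‖F (z (k+1)) - F (zh k)‖ ≤ L * (‖(1:ℝ)/L‖ * ‖_‖) := h2
        _ = _ := by
          rw [Real.norm_eq_abs, abs_of_pos (by positivity : (0:ℝ) < 1/L)]
          field_simp
    exact pow_le_pow_left₀ (norm_nonneg _) hnn 2
  -- the key algebraic identity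
  have key : E (k+1) - E k =
      -(D/2) * ((r-1)*(1/L + 2*ρ) - D) * (2*(k : ℝ) + r + 1)
          * ‖F (z (k+1)) + Gt (k+1)‖^2
      - (D*(k:ℝ)*((k:ℝ)+r)) *
          (⟪(F (z (k+1)) + Gt (k+1)) - (F (z k) + Gt k), z (k+1) - z k⟫
            - ρ * ‖(F (z (k+1)) + Gt (k+1)) - (F (z k) + Gt k)‖^2)
      - (D*r*(r-1)) *
          (⟪F (z (k+1)) + Gt (k+1), z (k+1) - zs⟫ - ρ * ‖F (z (k+1)) + Gt (k+1)‖^2)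
      - (D*((k:ℝ)+r)^2/(2*L)) *
          (‖((k : ℝ)/((k : ℝ) + r)) • (F (z k) + Gt k) - (F (zh k) + Gt (k+1))‖^2
            - ‖(F (z (k+1)) + Gt (k+1)) - (F (zh k) + Gt (k+1))‖^2) := by
    rw [hE (k+1), hE k, hu k, hz1]
    push_cast
    simp only [← real_inner_self_eq_norm_sq, inner_sub_left, inner_sub_right,
      inner_add_left, inner_add_right, real_inner_smul_left, real_inner_smul_right,
      real_inner_comm]
    field_simp
    ring
  have hbr : 0 ≤ (r-1)*(1/L + 2*ρ) - D := by linarith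
  have hP1 : 0 ≤ (D*(k:ℝ)*((k:ℝ)+r)) *
      (⟪(F (z (k+1)) + Gt (k+1)) - (F (z k) + Gt k), z (k+1) - z k⟫
        - ρ * ‖(F (z (k+1)) + Gt (k+1)) - (F (z k) + Gt k)‖^2) :=
    mul_nonneg (by positivity) (by linarith)
  have hP2 : 0 ≤ (D*r*(r-1)) *
      (⟪F (z (k+1)) + Gt (k+1), z (k+1) - zs⟫ - ρ * ‖F (z (k+1)) + Gt (k+1)‖^2) :=
    mul_nonneg (le_of_lt (mul_pos (mul_pos hD0 hr0) (by linarith : (0:ℝ) < r - 1))) (by linarith)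
  have hP3 : 0 ≤ (D*((k:ℝ)+r)^2/(2*L)) *
      (‖((k : ℝ)/((k : ℝ) + r)) • (F (z k) + Gt k) - (F (zh k) + Gt (k+1))‖^2
        - ‖(F (z (k+1)) + Gt (k+1)) - (F (zh k) + Gt (k+1))‖^2) :=
    mul_nonneg (by positivity) (by linarith)
  have hneg : -(D/2) * ((r-1)*(1/L + 2*ρ) - D) * (2*(k : ℝ) + r + 1)
      * ‖F (z (k+1)) + Gt (k+1)‖^2 ≤ 0 := by
    have h1 : 0 ≤ (D/2) * ((r-1)*(1/L + 2*ρ) - D) * (2*(k : ℝ) + r + 1)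
        * ‖F (z (k+1)) + Gt (k+1)‖^2 :=
      mul_nonneg (mul_nonneg (mul_nonneg (by linarith) hbr) (by linarith)) (sq_nonneg _)
    linarith
  have hmain : E (k+1) - E k ≤
      -(D/2) * ((r-1)*(1/L + 2*ρ) - D) * (2*(k : ℝ) + r + 1)
        * ‖F (z (k+1)) + Gt (k+1)‖^2 := by
    rw [key]; linarith
  exact ⟨hmain, hneg, by linarith⟩
end

section
/- Under the SPEG+ iteration with r > 1 and 0 < D ≤ (r−1)/L, for every solution z* (i.e. z* ∈ C and ⟨F(z*), z − z*⟩ ≥ 0 for all z ∈ C) the following hold: (i) for all k ≥ 1, (1/(2L) − D/(2(r−1)))·k²·‖F(z_k) + C̃_k‖² ≤ ((r³ − r²)/(2D))·‖z_0 − z*‖²; (ii) for all k ≥ 1, Drk·⟨F(z_k) + C̃_k, z_k − z*⟩ ≤ ((r³ − r²)/2)·‖z_0 − z*‖²; (iii) ∑_{k=0}^∞ (1/2)·((r−1)/L − D)·(2k + r + 1)·‖F(z_{k+1}) + C̃_{k+1}‖² ≤ ((r³ − r²)/(2D))·‖z_0 − z*‖²; (iv) ∑_{k=0}^∞ ((k+r)²/(2L))·‖C̃_{k+1/2}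 − (k/(k+r))·C̃_k‖² ≤ ((r³ − r²)/(2D))·‖z_0 − z*‖². In particular, if D < (r−1)/L then ‖F(z_k) + C̃_k‖² ≤ r²(r−1)² / ((((r−1)/L)·D − D²)·k²)·‖z_0 − z*‖² and ⟨F(z_k) + C̃_k, z_k − z*⟩ ≤ ((r² − r)/(2Dk))·‖z_0 − z*‖² for all k ≥ 1. -/
/-!
The proof is a Lyapunov argument. With `g_k = F z_k + C̃_k`, the energy
`V_k = k²/(2L) ‖g_k‖² + r k ⟪g_k, z_k - u_k⟫ + r²(r-1)/(2D) ‖u_k - z*‖²`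
satisfies `V_{k+1} + (the k-th summands of (iii) and (iv)) ≤ V_k`: the difference is, by an exact
algebraic identity, a nonnegative combination of a monotonicity inequality, three normal-cone
inequalities, the inequality `⟪g_{k+1}, z_{k+1} - z*⟫ ≥ 0` and the Lipschitz bound on
`‖F z_{k+1} - F z_{k+1/2}‖`. Telescoping from `V_0 = (r³ - r²)/(2D) ‖z_0 - z*‖²` gives (iii) and
(iv), and completing the square in `u_k` bounds `V_k` below by
`(1/(2L) - D/(2(r-1))) k² ‖g_k‖² + r k ⟪g_k, z_k - z*⟫`, a sum of two nonnegative terms; this gives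
(i), (ii) and the final rates.
-/

open RealInnerProductSpace

theorem speg_coeff_nonneg {L r D : ℝ} (hL : 0 < L) (hr : 1 < r) (hD : D ≤ (r - 1) / L) :
    0 ≤ 1 / (2 * L) - D / (2 * (r - 1)) := by
  rw [sub_nonneg, div_le_div_iff₀ (by positivity) (by linarith)]
  linarith [(le_div_iff₀ hL).1 hD]

section Energy

variable {H : Type*} [NormedAddCommGroup H] [InnerProductSpace ℝ H]

theorem inner_apply_add_sub_nonneg {F : H → H} {C : Set H} {z zs c : H}
    (hmono : 0 ≤ ⟪F z - F zs, z - zs⟫) (hzs : ∀ w ∈ C, 0 ≤ ⟪F zs, w - zs⟫) (hzsC : zs ∈ C)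
    (hz : z ∈ C) (hc : ∀ w ∈ C, ⟪c, w - z⟫ ≤ 0) :
    0 ≤ ⟪F z + c, z - zs⟫ := by
  have hcz : ⟪c, zs - z⟫ = -⟪c, z - zs⟫ := by rw [← inner_neg_right, neg_sub]
  have := hzs z hz
  have := hc zs hzsC
  rw [inner_sub_left] at hmono
  rw [inner_add_left]
  linarith

/-- The Lyapunov function of SPEG+, evaluated at `a = k`, `g = F z_k + C̃_k`, `z = z_k`,
`u = u_k`. -/
noncomputable def spegEnergy (L r D : ℝ) (zs : H) (a : ℝ) (g z u : H) : ℝ :=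
  a ^ 2 / (2 * L) * ‖g‖ ^ 2 + r * a * ⟪g, z - u⟫ + r ^ 2 * (r - 1) / (2 * D) * ‖u - zs‖ ^ 2

theorem spegEnergy_zero (L r D : ℝ) (zs g z : H) :
    spegEnergy L r D zs 0 g z z = (r ^ 3 - r ^ 2) / (2 * D) * ‖z - zs‖ ^ 2 := by
  simp only [spegEnergy]
  ring

theorem le_spegEnergy {L r D : ℝ} (hr : 1 < r) (hD : 0 < D) (zs : H) (a : ℝ) (g z u : H) :
    (1 / (2 * L) - D / (2 * (r - 1))) * a ^ 2 * ‖g‖ ^ 2 + r * a * ⟪g, z - zs⟫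
      ≤ spegEnergy L r D zs a g z u := by
  have hr1 : r - 1 ≠ 0 := sub_ne_zero.2 hr.ne'
  have hsq : spegEnergy L r D zs a g z u
      = (1 / (2 * L) - D / (2 * (r - 1))) * a ^ 2 * ‖g‖ ^ 2 + r * a * ⟪g, z - zs⟫
        + r ^ 2 * (r - 1) / (2 * D) * ‖u - zs - (D * a / (r * (r - 1))) • g‖ ^ 2 := by
    simp only [spegEnergy, ← real_inner_self_eq_norm_sq, inner_sub_left, inner_sub_right,
      real_inner_smul_left, real_inner_smul_right]
    simp only [real_inner_comm]
    field_simp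
    ring
  have := sub_pos.2 hr
  rw [hsq]
  exact le_add_of_nonneg_right (by positivity)

theorem spegEnergy_nonneg {L r D : ℝ} (hL : 0 < L) (hr : 1 < r) (hD0 : 0 < D)
    (hD : D ≤ (r - 1) / L) {a : ℝ} (ha : 0 ≤ a) {zs g z : H} (hgap : 0 ≤ ⟪g, z - zs⟫) (u : H) :
    0 ≤ spegEnergy L r D zs a g z u := by
  have := speg_coeff_nonneg hL hr hD
  refine le_trans ?_ (le_spegEnergy hr hD0 zs a g z u)
  positivity

/-- One SPEG+ step from `(z_k, u_k)` with `a = k`: `x = z_k`, `y = z_{k+1/2}`, `x1 = z_{k+1}`,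
`zt = z̃_{k+1}`, `f0, fh, f1` the values of `F` and `c0, ch, c1` the normal vectors
`C̃_k, C̃_{k+1/2}, C̃_{k+1}`. -/
theorem spegEnergy_sub_spegEnergy_succ {L r D a : ℝ} (hL : L ≠ 0) (hr : r ≠ 0) (hD : D ≠ 0)
    (ha : a + r ≠ 0) {x u y x1 zs zt u1 f0 fh f1 c0 ch c1 : H}
    (hzt : zt = (a / (a + r)) • x + (r / (a + r)) • u)
    (hch : ch = L • (zt - y) - (a / (a + r)) • f0)
    (hc1 : c1 = L • (zt - x1) - fh)
    (hu1 : u1 = u - (D / r) • (f1 + c1)) :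
    spegEnergy L r D zs a (f0 + c0) x u - spegEnergy L r D zs (a + 1) (f1 + c1) x1 u1
      - ((1 / 2) * ((r - 1) / L - D) * (2 * a + r + 1) * ‖f1 + c1‖ ^ 2
        + (a + r) ^ 2 / (2 * L) * ‖ch - (a / (a + r)) • c0‖ ^ 2)
      = a * (a + r) * ⟪f1 - f0, x1 - x⟫ - a * (a + r) * ⟪c0, y - x⟫
        - (a + r) ^ 2 * ⟪ch, x1 - y⟫ - a * (a + r) * ⟪c1, x - x1⟫
        + r * (r - 1) * ⟪f1 + c1, x1 - zs⟫
        + (a + r) ^ 2 / (2 * L) * (L ^ 2 * ‖x1 - y‖ ^ 2 - ‖f1 - fh‖ ^ 2) := by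
  subst hu1 hc1 hch hzt
  simp only [spegEnergy, ← real_inner_self_eq_norm_sq, inner_sub_left, inner_sub_right,
    inner_add_left, inner_add_right, real_inner_smul_left, real_inner_smul_right]
  simp only [real_inner_comm]
  field_simp
  ring

theorem spegEnergy_succ_add_le {L r D a : ℝ} (hL : 0 < L) (hr : 1 < r) (hD : 0 < D)
    (ha : 0 ≤ a) {x u y x1 zs zt u1 f0 fh f1 c0 ch c1 : H}
    (hzt : zt = (a / (a + r)) • x + (r / (a + r)) • u)
    (hch : ch = L • (zt - y) - (a / (a + r)) • f0)
    (hc1 : c1 = L • (zt - x1) - fh)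
    (hu1 : u1 = u - (D / r) • (f1 + c1))
    (hmono : 0 ≤ ⟪f1 - f0, x1 - x⟫) (hLip : ‖f1 - fh‖ ≤ L * ‖x1 - y‖)
    (hc0y : ⟪c0, y - x⟫ ≤ 0) (hchx1 : ⟪ch, x1 - y⟫ ≤ 0) (hc1x : ⟪c1, x - x1⟫ ≤ 0)
    (hgap : 0 ≤ ⟪f1 + c1, x1 - zs⟫) :
    spegEnergy L r D zs (a + 1) (f1 + c1) x1 u1
      + ((1 / 2) * ((r - 1) / L - D) * (2 * a + r + 1) * ‖f1 + c1‖ ^ 2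
        + (a + r) ^ 2 / (2 * L) * ‖ch - (a / (a + r)) • c0‖ ^ 2)
      ≤ spegEnergy L r D zs a (f0 + c0) x u := by
  have hr0 : 0 < r := by linarith
  have hid := spegEnergy_sub_spegEnergy_succ (zs := zs) (c0 := c0) hL.ne' hr0.ne' hD.ne'
    (by positivity) hzt hch hc1 hu1
  have hLip2 : ‖f1 - fh‖ ^ 2 ≤ L ^ 2 * ‖x1 - y‖ ^ 2 := by
    rw [← mul_pow]
    gcongr
  have has : 0 ≤ a * (a + r) := by positivity
  have hLip' : 0 ≤ (a + r) ^ 2 / (2 * L) * (L ^ 2 * ‖x1 - y‖ ^ 2 - ‖f1 - fh‖ ^ 2) :=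
    mul_nonneg (by positivity) (by linarith)
  linarith [mul_nonneg has hmono, mul_nonpos_of_nonneg_of_nonpos has hc0y,
    mul_nonpos_of_nonneg_of_nonpos (sq_nonneg (a + r)) hchx1,
    mul_nonpos_of_nonneg_of_nonpos has hc1x,
    mul_nonneg (mul_nonneg hr0.le (sub_nonneg.2 hr.le)) hgap]

end Energy

theorem le_and_sum_le_and_sum_le_of_descent {V p q : ℕ → ℝ} (hV : ∀ k, 0 ≤ V k)
    (hp : ∀ k, 0 ≤ p k) (hq : ∀ k, 0 ≤ q k) (h : ∀ k, V (k + 1) + (p k + q k) ≤ V k) (n : ℕ) :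
    V n ≤ V 0 ∧ ∑ k ∈ Finset.range n, p k ≤ V 0 ∧ ∑ k ∈ Finset.range n, q k ≤ V 0 := by
  have hsum : ∑ k ∈ Finset.range n, (p k + q k) ≤ V 0 - V n :=
    (Finset.sum_le_sum fun k _ => by linarith [h k]).trans_eq (Finset.sum_range_sub' V n)
  rw [Finset.sum_add_distrib] at hsum
  have := Finset.sum_nonneg fun k (_ : k ∈ Finset.range n) => hp k
  have := Finset.sum_nonneg fun k (_ : k ∈ Finset.range n) => hq k
  have := hV n
  exact ⟨by linarith, by linarith, by linarith⟩

theorem speg_rates_of_energy_le {L r D : ℝ} (hL : 0 < L) (hr : 1 < r) (hD0 : 0 < D)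
    (hD : D ≤ (r - 1) / L) {a G I N : ℝ} (ha : 0 ≤ a) (hG : 0 ≤ G) (hI : 0 ≤ I)
    (h : (1 / (2 * L) - D / (2 * (r - 1))) * a ^ 2 * G + r * a * I
      ≤ (r ^ 3 - r ^ 2) / (2 * D) * N) :
    (1 / (2 * L) - D / (2 * (r - 1))) * a ^ 2 * G ≤ (r ^ 3 - r ^ 2) / (2 * D) * N ∧
    D * r * a * I ≤ (r ^ 3 - r ^ 2) / 2 * N ∧
    (D < (r - 1) / L → 0 < a →
      G ≤ r ^ 2 * (r - 1) ^ 2 / ((((r - 1) / L) * D - D ^ 2) * a ^ 2) * N ∧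
      I ≤ (r ^ 2 - r) / (2 * D * a) * N) := by
  have hr1 : r - 1 ≠ 0 := by linarith
  have hAG : 0 ≤ (1 / (2 * L) - D / (2 * (r - 1))) * a ^ 2 * G := by
    have := speg_coeff_nonneg hL hr hD
    positivity
  have hrI : 0 ≤ r * a * I := mul_nonneg (mul_nonneg (by linarith) ha) hI
  have hAG_le : (1 / (2 * L) - D / (2 * (r - 1))) * a ^ 2 * G
      ≤ (r ^ 3 - r ^ 2) / (2 * D) * N := by
    linarith
  have hrI_le : r * a * I ≤ (r ^ 3 - r ^ 2) / (2 * D) * N := by linarith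
  refine ⟨hAG_le, ?_, fun hDlt ha' => ⟨?_, ?_⟩⟩
  · calc D * r * a * I = D * (r * a * I) := by ring
      _ ≤ D * ((r ^ 3 - r ^ 2) / (2 * D) * N) := by gcongr
      _ = (r ^ 3 - r ^ 2) / 2 * N := by field_simp
  · have hA : 0 < 1 / (2 * L) - D / (2 * (r - 1)) := by
      rw [sub_pos, div_lt_div_iff₀ (by positivity) (by linarith)]
      linarith [(lt_div_iff₀ hL).1 hDlt]
    calc G ≤ (r ^ 3 - r ^ 2) / (2 * D) * N / ((1 / (2 * L) - D / (2 * (r - 1))) * a ^ 2) := by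
          rw [le_div_iff₀' (by positivity)]; exact hAG_le
      _ = _ := by
          rw [show ((r - 1) / L) * D - D ^ 2
              = 2 * D * (r - 1) * (1 / (2 * L) - D / (2 * (r - 1))) by field_simp]
          field_simp
  · calc I ≤ (r ^ 3 - r ^ 2) / (2 * D) * N / (r * a) := by
          rw [le_div_iff₀' (by positivity)]; exact hrI_le
      _ = _ := by field_simp

theorem speg_convergence_rate_general
    {H : Type*} [NormedAddCommGroup H] [InnerProductSpace ℝ H]
    (L r D : ℝ) (F : H → H) (C : Set H)
    (z zh zt u Ct Ch : ℕ → H)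
    (hL : 0 < L)
    (hLip : ∀ x y : H, ‖F x - F y‖ ≤ L * ‖x - y‖)
    (hmono : ∀ x y : H, 0 ≤ ⟪F x - F y, x - y⟫)
    (hr : 1 < r) (hD0 : 0 < D) (hD : D ≤ (r - 1)/L)
    (hz0 : z 0 ∈ C) (hu0 : u 0 = z 0) (hC0 : Ct 0 = 0)
    (hzt : ∀ k : ℕ, zt (k+1) = ((k : ℝ)/((k : ℝ) + r)) • z k + (r/((k : ℝ) + r)) • u k)
    (hzhC : ∀ k : ℕ, zh k ∈ C)
    (hCh : ∀ k : ℕ, Ch k = L • (zt (k+1) - zh k) - ((k : ℝ)/((k : ℝ) + r)) • F (z k))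
    (hChproj : ∀ k : ℕ, ∀ w ∈ C, ⟪Ch k, w - zh k⟫ ≤ 0)
    (hzC : ∀ k : ℕ, z (k+1) ∈ C)
    (hCt : ∀ k : ℕ, Ct (k+1) = L • (zt (k+1) - z (k+1)) - F (zh k))
    (hCtproj : ∀ k : ℕ, ∀ w ∈ C, ⟪Ct (k+1), w - z (k+1)⟫ ≤ 0)
    (hu : ∀ k : ℕ, u (k+1) = u k - (D/r) • (F (z (k+1)) + Ct (k+1)))
    (zs : H) (hzsC : zs ∈ C) (hzs : ∀ w ∈ C, 0 ≤ ⟪F zs, w - zs⟫) :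
    (∀ k : ℕ, 1 ≤ k →
      (1/(2*L) - D/(2*(r-1))) * (k : ℝ)^2 * ‖F (z k) + Ct k‖^2
        ≤ (r^3 - r^2)/(2*D) * ‖z 0 - zs‖^2) ∧
    (∀ k : ℕ, 1 ≤ k →
      D*r*(k : ℝ) * ⟪F (z k) + Ct k, z k - zs⟫ ≤ (r^3 - r^2)/2 * ‖z 0 - zs‖^2) ∧
    (∀ n : ℕ, ∑ k ∈ Finset.range n,
        (1/2) * ((r - 1)/L - D) * (2*(k : ℝ) + r + 1) * ‖F (z (k+1)) + Ct (k+1)‖^2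
        ≤ (r^3 - r^2)/(2*D) * ‖z 0 - zs‖^2) ∧
    (∀ n : ℕ, ∑ k ∈ Finset.range n,
        (((k : ℝ) + r)^2/(2*L)) * ‖Ch k - ((k : ℝ)/((k : ℝ) + r)) • Ct k‖^2
        ≤ (r^3 - r^2)/(2*D) * ‖z 0 - zs‖^2) ∧
    (D < (r - 1)/L → ∀ k : ℕ, 1 ≤ k →
      ‖F (z k) + Ct k‖^2
        ≤ r^2*(r-1)^2 / ((((r - 1)/L) * D - D^2) * (k : ℝ)^2) * ‖z 0 - zs‖^2 ∧
      ⟪F (z k) + Ct k, z k - zs⟫ ≤ (r^2 - r)/(2*D*(k : ℝ)) * ‖z 0 - zs‖^2) := by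
  have hzC' : ∀ k, z k ∈ C
    | 0 => hz0
    | k + 1 => hzC k
  have hCt' : ∀ k, ∀ w ∈ C, ⟪Ct k, w - z k⟫ ≤ 0
    | 0, w, _ => by simp [hC0]
    | k + 1, w, hw => hCtproj k w hw
  have hgap k : 0 ≤ ⟪F (z k) + Ct k, z k - zs⟫ :=
    inner_apply_add_sub_nonneg (hmono _ _) hzs hzsC (hzC' k) (hCt' k)
  set V : ℕ → ℝ := fun k => spegEnergy L r D zs k (F (z k) + Ct k) (z k) (u k)
  set p : ℕ → ℝ := fun k =>
    (1/2) * ((r - 1)/L - D) * (2*(k : ℝ) + r + 1) * ‖F (z (k+1)) + Ct (k+1)‖^2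
  set q : ℕ → ℝ := fun k =>
    (((k : ℝ) + r)^2/(2*L)) * ‖Ch k - ((k : ℝ)/((k : ℝ) + r)) • Ct k‖^2
  have hstep k : V (k + 1) + (p k + q k) ≤ V k := by
    simpa only [V, p, q, Nat.cast_succ] using spegEnergy_succ_add_le hL hr hD0 k.cast_nonneg
      (hzt k) (hCh k) (hCt k) (hu k) (hmono _ _) (hLip _ _) (hCt' k _ (hzhC k))
      (hChproj k _ (hzC k)) (hCtproj k _ (hzC' k)) (hgap (k + 1))
  have hp k : 0 ≤ p k := mul_nonneg (mul_nonneg (by linarith) (by positivity)) (sq_nonneg _)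
  have hbd n := le_and_sum_le_and_sum_le_of_descent (V := V)
    (fun k => spegEnergy_nonneg hL hr hD0 hD k.cast_nonneg (hgap k) _) hp
    (fun k => by positivity) hstep n
  have hV0 : V 0 = (r ^ 3 - r ^ 2) / (2 * D) * ‖z 0 - zs‖ ^ 2 := by
    simp only [V, Nat.cast_zero, hu0, spegEnergy_zero]
  rw [hV0] at hbd
  have hrate (k : ℕ) := speg_rates_of_energy_le hL hr hD0 hD k.cast_nonneg (sq_nonneg _)
    (hgap k) ((le_spegEnergy hr hD0 zs k _ _ (u k)).trans (hbd k).1)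
  exact ⟨fun k _ => (hrate k).1, fun k _ => (hrate k).2.1, fun n => (hbd n).2.1,
    fun n => (hbd n).2.2, fun hDlt k hk => (hrate k).2.2 hDlt (Nat.cast_pos.2 hk)⟩

/-- Convergence rates of the Symplectic Projected Extra-Gradient+ (SPEG+) method. -/
theorem speg_convergence_rate
    {H : Type*} [NormedAddCommGroup H] [InnerProductSpace ℝ H] [CompleteSpace H]
    (L r D : ℝ) (F : H → H) (C : Set H)
    (z zh zt u Ct Ch : ℕ → H)
    (hL : 0 < L)
    (hLip : ∀ x y : H, ‖F x - F y‖ ≤ L * ‖x - y‖)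
    (hmono : ∀ x y : H, 0 ≤ ⟪F x - F y, x - y⟫)
    (hCne : C.Nonempty) (hCclosed : IsClosed C) (hCconv : Convex ℝ C)
    (hr : 1 < r) (hD0 : 0 < D) (hD : D ≤ (r - 1)/L)
    (hz0 : z 0 ∈ C) (hu0 : u 0 = z 0) (hC0 : Ct 0 = 0)
    (hzt : ∀ k : ℕ, zt (k+1) = ((k : ℝ)/((k : ℝ) + r)) • z k + (r/((k : ℝ) + r)) • u k)
    (hzhC : ∀ k : ℕ, zh k ∈ C)
    (hCh : ∀ k : ℕ, Ch k = L • (zt (k+1) - zh k) - ((k : ℝ)/((k : ℝ) + r)) • F (z k))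
    (hChproj : ∀ k : ℕ, ∀ w ∈ C, ⟪Ch k, w - zh k⟫ ≤ 0)
    (hzC : ∀ k : ℕ, z (k+1) ∈ C)
    (hCt : ∀ k : ℕ, Ct (k+1) = L • (zt (k+1) - z (k+1)) - F (zh k))
    (hCtproj : ∀ k : ℕ, ∀ w ∈ C, ⟪Ct (k+1), w - z (k+1)⟫ ≤ 0)
    (hu : ∀ k : ℕ, u (k+1) = u k - (D/r) • (F (z (k+1)) + Ct (k+1)))
    (zs : H) (hzsC : zs ∈ C) (hzs : ∀ w ∈ C, 0 ≤ ⟪F zs, w - zs⟫) :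
    (∀ k : ℕ, 1 ≤ k →
      (1/(2*L) - D/(2*(r-1))) * (k : ℝ)^2 * ‖F (z k) + Ct k‖^2
        ≤ (r^3 - r^2)/(2*D) * ‖z 0 - zs‖^2) ∧
    (∀ k : ℕ, 1 ≤ k →
      D*r*(k : ℝ) * ⟪F (z k) + Ct k, z k - zs⟫ ≤ (r^3 - r^2)/2 * ‖z 0 - zs‖^2) ∧
    (∀ n : ℕ, ∑ k ∈ Finset.range n,
        (1/2) * ((r - 1)/L - D) * (2*(k : ℝ) + r + 1) * ‖F (z (k+1)) + Ct (k+1)‖^2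
        ≤ (r^3 - r^2)/(2*D) * ‖z 0 - zs‖^2) ∧
    (∀ n : ℕ, ∑ k ∈ Finset.range n,
        (((k : ℝ) + r)^2/(2*L)) * ‖Ch k - ((k : ℝ)/((k : ℝ) + r)) • Ct k‖^2
        ≤ (r^3 - r^2)/(2*D) * ‖z 0 - zs‖^2) ∧
    (D < (r - 1)/L → ∀ k : ℕ, 1 ≤ k →
      ‖F (z k) + Ct k‖^2
        ≤ r^2*(r-1)^2 / ((((r - 1)/L) * D - D^2) * (k : ℝ)^2) * ‖z 0 - zs‖^2 ∧
      ⟪F (z k) + Ct k, z k - zs⟫ ≤ (r^2 - r)/(2*D*(k : ℝ)) * ‖z 0 - zs‖^2) :=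
  speg_convergence_rate_general L r D F C z zh zt u Ct Ch hL hLip hmono hr hD0 hD hz0 hu0 hC0 hzt
    hzhC hCh hChproj hzC hCt hCtproj hu zs hzsC hzs
end

section
/- Under the SPEG+ iteration with r > 1 and 0 < D ≤ (r−1)/L, fix a solution z* and define E(k) = (Dk²/(2L))·‖F(z_k) + C̃_k‖² + Drk·⟨F(z_k) + C̃_k, z_k − u_k⟩ + ((r³ − r²)/2)·‖u_k − z*‖². Then for all integers k ≥ 0, E(k+1) − E(k) ≤ −(D/2)·((r−1)/L − D)·(2k + r + 1)·‖F(z_{k+1}) + C̃_{k+1}‖² − (D/(2L))·‖(k+r)·C̃_{k+1/2} − k·C̃_k‖² ≤ 0. -/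
open RealInnerProductSpace Filter

set_option maxHeartbeats 4000000 in
private lemma speg_key {H : Type*} [NormedAddCommGroup H] [InnerProductSpace ℝ H]
    (L r D kk : ℝ) (A Cv Hh S FA FH FC FS G0 Zt B W C1 u1 : H)
    (hB : B = r⁻¹ • ((kk+r) • Zt - kk • A))
    (hW : W = L • ((kk+r) • Zt - (kk+r) • Hh) - kk • FA)
    (hC1 : C1 = L • (Zt - Cv) - FH)
    (hu1 : u1 = B - (D/r) • (FC + C1))
    (hL : L ≠ 0) (hr0 : r ≠ 0) :
    ((D*(kk+1)^2/(2*L)) * ‖FC + C1‖^2 + D*r*(kk+1) * ⟪FC + C1, Cv - u1⟫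
        + (r^3 - r^2)/2 * ‖u1 - S‖^2)
      - ((D*kk^2/(2*L)) * ‖FA + G0‖^2 + D*r*kk * ⟪FA + G0, A - B⟫
        + (r^3 - r^2)/2 * ‖B - S‖^2)
    = -(D/2) * ((r-1)/L - D) * (2*kk + r + 1) * ‖FC + C1‖^2
        - (D/(2*L)) * ‖W - kk • G0‖^2
      + D * ((kk+r)^2/(2*L) * (‖FC - FH‖^2 - L^2 * ‖Cv - Hh‖^2)
        + (kk+r) * ⟪W, Cv - Hh⟫
        + kk*(kk+r) * ⟪G0, Hh - A⟫
        + kk*(kk+r) * ⟪FC - FA, A - Cv⟫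
        + kk*(kk+r) * ⟪C1, A - Cv⟫
        + r*(r-1) * (⟪C1, S - Cv⟫ - ⟪FC - FS, Cv - S⟫ - ⟪FS, Cv - S⟫)) := by
  subst hC1 hB hu1 hW
  simp only [← real_inner_self_eq_norm_sq, inner_sub_left, inner_sub_right,
    inner_add_left, inner_add_right, real_inner_smul_left, real_inner_smul_right]
  simp only [real_inner_comm Cv A, real_inner_comm Hh A, real_inner_comm Hh Cv, real_inner_comm S A, real_inner_comm S Cv, real_inner_comm S Hh, real_inner_comm FA A, real_inner_comm FA Cv, real_inner_comm FA Hh, real_inner_comm FA S, real_inner_comm FH A, real_inner_comm FH Cv, real_inner_comm FH Hh, real_inner_comm FH S, real_inner_comm FH FA, real_inner_comm FC A, real_inner_comm FC Cv, real_inner_comm FC Hh, real_inner_comm FC S, real_inner_comm FC FA, real_inner_comm FC FH, real_inner_comm FS A, real_inner_comm FS Cv, real_inner_comm FS Hh, real_inner_comm FS S, real_inner_comm FS FA, real_inner_comm FS FH, real_inner_comm FS FC, real_inner_comm G0 A, real_inner_comm G0 Cv, real_inner_comm G0 Hh, real_inner_comm G0 S, real_inner_comm G0 FA, real_inner_comm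 G0 FH, real_inner_comm G0 FC, real_inner_comm G0 FS, real_inner_comm Zt A, real_inner_comm Zt Cv, real_inner_comm Zt Hh, real_inner_comm Zt S, real_inner_comm Zt FA, real_inner_comm Zt FH, real_inner_comm Zt FC, real_inner_comm Zt FS, real_inner_comm Zt G0]
  field_simp
  ring

set_option maxHeartbeats 2000000 in
/-- Lyapunov decrease for the Symplectic Projected Extra-Gradient+ (SPEG+) method. -/
theorem speg_lyapunov_decrease
    {H : Type*} [NormedAddCommGroup H] [InnerProductSpace ℝ H] [CompleteSpace H]
    (L r D : ℝ) (F : H → H) (C : Set H)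
    (z zh zt u Ct Ch : ℕ → H)
    (hL : 0 < L)
    (hLip : ∀ x y : H, ‖F x - F y‖ ≤ L * ‖x - y‖)
    (hmono : ∀ x y : H, 0 ≤ ⟪F x - F y, x - y⟫)
    (hCne : C.Nonempty) (hCclosed : IsClosed C) (hCconv : Convex ℝ C)
    (hr : 1 < r) (hD0 : 0 < D) (hD : D ≤ (r - 1)/L)
    (hz0 : z 0 ∈ C) (hu0 : u 0 = z 0) (hC0 : Ct 0 = 0)
    (hzt : ∀ k : ℕ, zt (k+1) = ((k : ℝ)/((k : ℝ) + r)) • z k + (r/((k : ℝ) + r)) • u k)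
    (hzhC : ∀ k : ℕ, zh k ∈ C)
    (hCh : ∀ k : ℕ, Ch k = L • (zt (k+1) - zh k) - ((k : ℝ)/((k : ℝ) + r)) • F (z k))
    (hChproj : ∀ k : ℕ, ∀ w ∈ C, ⟪Ch k, w - zh k⟫ ≤ 0)
    (hzC : ∀ k : ℕ, z (k+1) ∈ C)
    (hCt : ∀ k : ℕ, Ct (k+1) = L • (zt (k+1) - z (k+1)) - F (zh k))
    (hCtproj : ∀ k : ℕ, ∀ w ∈ C, ⟪Ct (k+1), w - z (k+1)⟫ ≤ 0)
    (hu : ∀ k : ℕ, u (k+1) = u k - (D/r) • (F (z (k+1)) + Ct (k+1)))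
    (zs : H) (hzsC : zs ∈ C) (hzs : ∀ w ∈ C, 0 ≤ ⟪F zs, w - zs⟫)
    (E : ℕ → ℝ)
    (hE : ∀ k : ℕ, E k =
      (D*(k : ℝ)^2/(2*L)) * ‖F (z k) + Ct k‖^2
        + D*r*(k : ℝ) * ⟪F (z k) + Ct k, z k - u k⟫
        + (r^3 - r^2)/2 * ‖u k - zs‖^2) :
    ∀ k : ℕ,
      (E (k+1) - E k ≤
        -(D/2) * ((r-1)/L - D) * (2*(k : ℝ) + r + 1) * ‖F (z (k+1)) + Ct (k+1)‖^2
          - (D/(2*L)) * ‖((k : ℝ) + r) • Ch k - (k : ℝ) • Ct k‖^2) ∧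
      (-(D/2) * ((r-1)/L - D) * (2*(k : ℝ) + r + 1) * ‖F (z (k+1)) + Ct (k+1)‖^2
          - (D/(2*L)) * ‖((k : ℝ) + r) • Ch k - (k : ℝ) • Ct k‖^2 ≤ 0) := by
  intro k
  have hk0 : (0:ℝ) ≤ (k:ℝ) := Nat.cast_nonneg k
  have hr0 : (0:ℝ) < r := by linarith
  have hs : (0:ℝ) < (k:ℝ) + r := by linarith
  have hzCall : ∀ n, z n ∈ C := by
    intro n
    cases n with
    | zero => exact hz0
    | succ m => exact hzC m
  have hB : u k = r⁻¹ • (((k:ℝ)+r) • zt (k+1) - (k:ℝ) • z k) := by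
    rw [hzt k]
    match_scalars <;> (field_simp; try ring)
  have hW : ((k:ℝ)+r) • Ch k
      = L • (((k:ℝ)+r) • zt (k+1) - ((k:ℝ)+r) • zh k) - (k:ℝ) • F (z k) := by
    rw [hCh k]
    match_scalars <;> (field_simp; try ring)
  have hkey := speg_key L r D (k:ℝ) (z k) (z (k+1)) (zh k) zs
      (F (z k)) (F (zh k)) (F (z (k+1))) (F zs) (Ct k)
      (zt (k+1)) (u k) (((k:ℝ)+r) • Ch k) (Ct (k+1)) (u (k+1))
      hB hW (hCt k) (hu k) (ne_of_gt hL) (ne_of_gt hr0)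
  have hT1 : ‖F (z (k+1)) - F (zh k)‖^2 - L^2 * ‖z (k+1) - zh k‖^2 ≤ 0 := by
    have h := hLip (z (k+1)) (zh k)
    nlinarith [norm_nonneg (F (z (k+1)) - F (zh k)), norm_nonneg (z (k+1) - zh k), hL]
  have hT2 : ⟪Ch k, z (k+1) - zh k⟫ ≤ 0 := hChproj k _ (hzC k)
  have hT3 : ⟪Ct k, zh k - z k⟫ ≤ 0 := by
    cases k with
    | zero => simp [hC0]
    | succ m => exact hCtproj m _ (hzhC (m+1))
  have hT4 : ⟪F (z (k+1)) - F (z k), z k - z (k+1)⟫ ≤ 0 := by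
    have h := hmono (z (k+1)) (z k)
    have e : z k - z (k+1) = -(z (k+1) - z k) := by abel
    rw [e, inner_neg_right]
    linarith
  have hT5 : ⟪Ct (k+1), z k - z (k+1)⟫ ≤ 0 := hCtproj k _ (hzCall k)
  have hT6a : ⟪Ct (k+1), zs - z (k+1)⟫ ≤ 0 := hCtproj k _ hzsC
  have hT6b : (0:ℝ) ≤ ⟪F (z (k+1)) - F zs, z (k+1) - zs⟫ := hmono _ _
  have hT6c : (0:ℝ) ≤ ⟪F zs, z (k+1) - zs⟫ := hzs _ (hzC k)
  have c1 : (0:ℝ) ≤ ((k:ℝ)+r)^2/(2*L) := by positivity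
  have c2 : (0:ℝ) ≤ ((k:ℝ)+r)^2 := sq_nonneg _
  have c3 : (0:ℝ) ≤ (k:ℝ)*((k:ℝ)+r) := by positivity
  have c4 : (0:ℝ) ≤ r*(r-1) := by nlinarith
  have p1 : ((k:ℝ)+r)^2/(2*L) * (‖F (z (k+1)) - F (zh k)‖^2 - L^2 * ‖z (k+1) - zh k‖^2) ≤ 0 :=
    mul_nonpos_iff.mpr (Or.inl ⟨c1, hT1⟩)
  have hT2' : ⟪((k:ℝ)+r) • Ch k, z (k+1) - zh k⟫ ≤ 0 := by
    rw [real_inner_smul_left]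
    exact mul_nonpos_iff.mpr (Or.inl ⟨hs.le, hT2⟩)
  have p2 : ((k:ℝ)+r) * ⟪((k:ℝ)+r) • Ch k, z (k+1) - zh k⟫ ≤ 0 :=
    mul_nonpos_iff.mpr (Or.inl ⟨hs.le, hT2'⟩)
  have p3 : (k:ℝ)*((k:ℝ)+r) * ⟪Ct k, zh k - z k⟫ ≤ 0 :=
    mul_nonpos_iff.mpr (Or.inl ⟨c3, hT3⟩)
  have p4 : (k:ℝ)*((k:ℝ)+r) * ⟪F (z (k+1)) - F (z k), z k - z (k+1)⟫ ≤ 0 :=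
    mul_nonpos_iff.mpr (Or.inl ⟨c3, hT4⟩)
  have p5 : (k:ℝ)*((k:ℝ)+r) * ⟪Ct (k+1), z k - z (k+1)⟫ ≤ 0 :=
    mul_nonpos_iff.mpr (Or.inl ⟨c3, hT5⟩)
  have p6 : r*(r-1) * (⟪Ct (k+1), zs - z (k+1)⟫ - ⟪F (z (k+1)) - F zs, z (k+1) - zs⟫
      - ⟪F zs, z (k+1) - zs⟫) ≤ 0 :=
    mul_nonpos_iff.mpr (Or.inl ⟨c4, by linarith⟩)
  have hDT : D * (((k:ℝ)+r)^2/(2*L) * (‖F (z (k+1)) - F (zh k)‖^2 - L^2 * ‖z (k+1) - zh k‖^2)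
      + ((k:ℝ)+r) * ⟪((k:ℝ)+r) • Ch k, z (k+1) - zh k⟫
      + (k:ℝ)*((k:ℝ)+r) * ⟪Ct k, zh k - z k⟫
      + (k:ℝ)*((k:ℝ)+r) * ⟪F (z (k+1)) - F (z k), z k - z (k+1)⟫
      + (k:ℝ)*((k:ℝ)+r) * ⟪Ct (k+1), z k - z (k+1)⟫
      + r*(r-1) * (⟪Ct (k+1), zs - z (k+1)⟫ - ⟪F (z (k+1)) - F zs, z (k+1) - zs⟫
        - ⟪F zs, z (k+1) - zs⟫)) ≤ 0 :=
    mul_nonpos_iff.mpr (Or.inl ⟨hD0.le, by linarith⟩)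
  constructor
  · have e1 := hE (k+1)
    have e0 := hE k
    push_cast at e1
    rw [e1, e0]
    linarith [hkey, hDT]
  · have hA : (0:ℝ) ≤ (r-1)/L - D := by linarith
    have q1 : (0:ℝ) ≤ D/2 * ((r-1)/L - D) * (2*(k:ℝ)+r+1) * ‖F (z (k+1)) + Ct (k+1)‖^2 := by
      apply mul_nonneg
      apply mul_nonneg
      apply mul_nonneg
      · linarith
      · exact hA
      · linarith
      · positivity
    have q2 : (0:ℝ) ≤ D/(2*L) * ‖((k:ℝ)+r) • Ch k - (k:ℝ) • Ct k‖^2 := by positivity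
    linarith
end

section
/- Under the step-size-s SFBS iteration with F L-Lipschitz, G such that T = F + G is ρ-comonotone with ρ > −1/(2L), max{0, −2ρ} < s < 1/L, r > 1 and 0 < D < (r−1)(s + 2ρ), the series ∑_{k=1}^∞ ‖z_k − u_k‖²/k converges (is finite). -/
set_option maxHeartbeats 1000000


open RealInnerProductSpace Filter

/-- Scalar core of the one-step Lyapunov inequality for SFBS. -/
lemma sfbs_core (K r s ρ D xx xy xp xw yy yp yw yv pp vv : ℝ)
    (hK : 0 ≤ K) (hr : 1 < r) (hs : 0 < s) (hD : 0 < D)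
    (hA : ρ * (yy - 2*xy + xx) ≤
      -(r/(K+r))*(yw - xw) - s*(yp - xp) - 2*ρ*(K/(K+r))*(xy - xx))
    (hB : ρ * yy ≤ (K/(K+r))*yw - s*yp - 2*ρ*(K/(K+r))*xy + yv)
    (hC : yy - 2*yp + pp ≤ pp - 2*(K/(K+r))*xp + (K/(K+r))^2*xx) :
    (K+1)*((K+1)*(s+2*ρ) - 2*r*ρ)*yy
      + 2*r*(K+1)*((K/(K+r))*yw - s*yp - 2*ρ*(K/(K+r))*xy + (D/r)*yy)
      + (r^2*(r-1)/D)*(vv - 2*(D/r)*yv + (D/r)^2*yy)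
      + ((r-1)*(s+2*ρ) - D)*(2*K+r+1)*yy
    ≤ K*(K*(s+2*ρ) - 2*r*ρ)*xx + 2*r*K*xw + (r^2*(r-1)/D)*vv := by
  have hKr : 0 < K + r := by linarith
  have h1 : 0 ≤ 2*K*(K+r) * ((-(r/(K+r))*(yw - xw) - s*(yp - xp) - 2*ρ*(K/(K+r))*(xy - xx))
      - ρ * (yy - 2*xy + xx)) :=
    mul_nonneg (by positivity) (by linarith)
  have h2 : 0 ≤ 2*r*(r-1) * (((K/(K+r))*yw - s*yp - 2*ρ*(K/(K+r))*xy + yv) - ρ * yy) :=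
    mul_nonneg (by nlinarith) (by linarith)
  have h3 : 0 ≤ s*(K+r)^2 * ((pp - 2*(K/(K+r))*xp + (K/(K+r))^2*xx) - (yy - 2*yp + pp)) :=
    mul_nonneg (by positivity) (by linarith)
  have key : (K*(K*(s+2*ρ) - 2*r*ρ)*xx + 2*r*K*xw + (r^2*(r-1)/D)*vv)
      - ((K+1)*((K+1)*(s+2*ρ) - 2*r*ρ)*yy
      + 2*r*(K+1)*((K/(K+r))*yw - s*yp - 2*ρ*(K/(K+r))*xy + (D/r)*yy)
      + (r^2*(r-1)/D)*(vv - 2*(D/r)*yv + (D/r)^2*yy)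
      + ((r-1)*(s+2*ρ) - D)*(2*K+r+1)*yy)
      = 2*K*(K+r) * ((-(r/(K+r))*(yw - xw) - s*(yp - xp) - 2*ρ*(K/(K+r))*(xy - xx))
          - ρ * (yy - 2*xy + xx))
      + 2*r*(r-1) * (((K/(K+r))*yw - s*yp - 2*ρ*(K/(K+r))*xy + yv) - ρ * yy)
      + s*(K+r)^2 * ((pp - 2*(K/(K+r))*xp + (K/(K+r))^2*xx) - (yy - 2*yp + pp)) := by
    field_simp
    ring
  linarith

/-- Scalar convexity step used for the anchored recursion of `‖z_k − u_k‖`. -/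
lemma sfbs_conv (K r a b c : ℝ) (hK : 0 ≤ K) (hr : 0 < r)
    (ha : 0 ≤ a) (hb : 0 ≤ b) (hc : 0 ≤ c) (h : c ≤ (K/(K+r))*a + b) :
    (r/(K+r))*a^2 ≤ a^2 - c^2 + ((K+r)/r)*b^2 := by
  have hKr : 0 < K + r := by linarith
  have h2 : c^2 ≤ ((K/(K+r))*a + b)^2 := by
    have hb' : 0 ≤ (K/(K+r))*a + b := le_trans hc h
    calc c^2 = c*c := sq c
    _ ≤ ((K/(K+r))*a + b) * ((K/(K+r))*a + b) := mul_le_mul h h hc hb'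
    _ = ((K/(K+r))*a + b)^2 := (sq _).symm
  have expand : a^2 - ((K/(K+r))*a + b)^2 + ((K+r)/r)*b^2 - (r/(K+r))*a^2
      = (K/r)*((r/(K+r))*a - b)^2 := by
    field_simp
    ring
  have hpos : 0 ≤ (K/r)*((r/(K+r))*a - b)^2 := by positivity
  linarith

/-- The series `∑_{k=1}^∞ ‖z_k − u_k‖²/k` converges for the step-size-`s` SFBS method. -/
theorem sfbs_summable
    {H : Type*} [NormedAddCommGroup H] [InnerProductSpace ℝ H] [CompleteSpace H]
    (L ρ s r D : ℝ) (F : H → H) (G : H → Set H)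
    (z zh zt u Gt : ℕ → H)
    (hL : 0 < L) (hρ : -1/(2*L) < ρ)
    (hLip : ∀ x y : H, ‖F x - F y‖ ≤ L * ‖x - y‖)
    (hcomono : ∀ x y g h : H, g ∈ G x → h ∈ G y →
      ρ * ‖(F x + g) - (F y + h)‖^2 ≤ ⟪(F x + g) - (F y + h), x - y⟫)
    (hsol : ∃ w : H, -F w ∈ G w)
    (hs0 : max 0 (-2*ρ) < s) (hs1 : s < 1/L)
    (hr : 1 < r) (hD0 : 0 < D) (hD : D < (r - 1) * (s + 2*ρ))
    (hu0 : u 0 = z 0) (hG0 : Gt 0 ∈ G (z 0))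
    (hzt : ∀ k : ℕ, zt (k+1) = ((k : ℝ)/((k : ℝ) + r)) • z k + (r/((k : ℝ) + r)) • u k)
    (hzh : ∀ k : ℕ, zh k =
      zt (k+1) - ((k : ℝ)/((k : ℝ) + r) * (s + 2*ρ)) • (F (z k) + Gt k))
    (hz : ∀ k : ℕ, z (k+1) = zt (k+1) - s • (F (zh k) + Gt (k+1))
        - ((2*ρ*(k : ℝ))/((k : ℝ) + r)) • (F (z k) + Gt k))
    (hGt : ∀ k : ℕ, Gt (k+1) ∈ G (z (k+1)))
    (hu : ∀ k : ℕ, u (k+1) = u k - (D/r) • (F (z (k+1)) + Gt (k+1))) :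
    Summable (fun k : ℕ => ‖z (k+1) - u (k+1)‖^2 / ((k : ℝ) + 1)) := by
  obtain ⟨zs, hzs⟩ := hsol
  have hr0 : (0:ℝ) < r := by linarith
  have hs' : (0:ℝ) < s := lt_of_le_of_lt (le_max_left 0 (-2*ρ)) hs0
  have h2ρ : -2*ρ < s := lt_of_le_of_lt (le_max_right 0 (-2*ρ)) hs0
  have hσ : (0:ℝ) < s + 2*ρ := by linarith
  have hLs : L*s < 1 := by
    have h := (lt_div_iff₀ hL).1 hs1
    nlinarith
  have hLs0 : (0:ℝ) ≤ L*s := by positivity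
  have hkr : ∀ k : ℕ, (0:ℝ) < (k:ℝ) + r := fun k => by positivity
  have hkk : ∀ k : ℕ, 0 ≤ (k:ℝ)/((k:ℝ)+r) ∧ (k:ℝ)/((k:ℝ)+r) ≤ 1 := by
    intro k
    constructor
    · positivity
    · rw [div_le_one (hkr k)]; linarith
  have hGmem : ∀ k, Gt k ∈ G (z k) := by
    intro k
    cases k with
    | zero => exact hG0
    | succ n => exact hGt n
  -- comonotonicity instances
  have hc1 : ∀ k : ℕ, ρ * ‖(F (z (k+1)) + Gt (k+1)) - (F (z k) + Gt k)‖^2 ≤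
      ⟪(F (z (k+1)) + Gt (k+1)) - (F (z k) + Gt k), z (k+1) - z k⟫ :=
    fun k => hcomono _ _ _ _ (hGmem (k+1)) (hGmem k)
  have hc2 : ∀ k : ℕ, ρ * ‖F (z k) + Gt k‖^2 ≤ ⟪F (z k) + Gt k, z k - zs⟫ := by
    intro k
    have h := hcomono (z k) zs (Gt k) (-F zs) (hGmem k) hzs
    simpa using h
  -- vector recurrences
  have hR1 : ∀ k : ℕ, z (k+1) - z k =
      -((r/((k:ℝ)+r)) • (z k - u k)) - s • (F (zh k) + Gt (k+1))
        - ((2*ρ*(k:ℝ)/((k:ℝ)+r)) • (F (z k) + Gt k)) := by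
    intro k
    have h := (hkr k).ne'
    rw [hz k, hzt k]
    match_scalars <;> (field_simp; try ring)
  have hR2 : ∀ k : ℕ, z (k+1) - zs =
      ((k:ℝ)/((k:ℝ)+r)) • (z k - u k) - s • (F (zh k) + Gt (k+1))
        - ((2*ρ*(k:ℝ)/((k:ℝ)+r)) • (F (z k) + Gt k)) + (u k - zs) := by
    intro k
    have h := (hkr k).ne'
    rw [hz k, hzt k]
    match_scalars <;> (field_simp; try ring)
  have hR3 : ∀ k : ℕ, z (k+1) - u (k+1) =
      ((k:ℝ)/((k:ℝ)+r)) • (z k - u k) - s • (F (zh k) + Gt (k+1))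
        - ((2*ρ*(k:ℝ)/((k:ℝ)+r)) • (F (z k) + Gt k))
        + (D/r) • (F (z (k+1)) + Gt (k+1)) := by
    intro k
    have h2 := hR2 k
    have h4 : u (k+1) - zs = (u k - zs) - (D/r) • (F (z (k+1)) + Gt (k+1)) := by
      rw [hu k]; abel
    have h5 : z (k+1) - u (k+1) = (z (k+1) - zs) - (u (k+1) - zs) := by abel
    rw [h5, h2, h4]
    abel
  have hR4 : ∀ k : ℕ, u (k+1) - zs = (u k - zs) - (D/r) • (F (z (k+1)) + Gt (k+1)) := by
    intro k
    rw [hu k]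
    abel
  have hR5 : ∀ k : ℕ, z (k+1) - zh k =
      (-s) • ((F (zh k) + Gt (k+1)) - ((k:ℝ)/((k:ℝ)+r)) • (F (z k) + Gt k)) := by
    intro k
    have h := (hkr k).ne'
    rw [hz k, hzh k]
    match_scalars <;> (field_simp; try ring)
  -- Lipschitz bound
  have hlip1 : ∀ k : ℕ, ‖(F (z (k+1)) + Gt (k+1)) - (F (zh k) + Gt (k+1))‖ ≤
      L*s*‖(F (zh k) + Gt (k+1)) - ((k:ℝ)/((k:ℝ)+r)) • (F (z k) + Gt k)‖ := by
    intro k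
    have e : (F (z (k+1)) + Gt (k+1)) - (F (zh k) + Gt (k+1)) = F (z (k+1)) - F (zh k) := by
      abel
    have h := hLip (z (k+1)) (zh k)
    rw [e]
    calc ‖F (z (k+1)) - F (zh k)‖ ≤ L * ‖z (k+1) - zh k‖ := h
    _ = L*s*‖(F (zh k) + Gt (k+1)) - ((k:ℝ)/((k:ℝ)+r)) • (F (z k) + Gt k)‖ := by
        rw [hR5 k, norm_smul, Real.norm_eq_abs, abs_neg, abs_of_pos hs']
        ring
  have hlip2 : ∀ k : ℕ, ‖(F (z (k+1)) + Gt (k+1)) - (F (zh k) + Gt (k+1))‖ ≤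
      ‖(F (zh k) + Gt (k+1)) - ((k:ℝ)/((k:ℝ)+r)) • (F (z k) + Gt k)‖ := by
    intro k
    have h := hlip1 k
    have hn : (0:ℝ) ≤ ‖(F (zh k) + Gt (k+1)) - ((k:ℝ)/((k:ℝ)+r)) • (F (z k) + Gt k)‖ :=
      norm_nonneg _
    nlinarith
  -- the Lyapunov function
  set V : ℕ → ℝ := fun k => (k:ℝ)*((k:ℝ)*(s+2*ρ) - 2*r*ρ)*‖F (z k) + Gt k‖^2
      + 2*r*(k:ℝ)*⟪F (z k) + Gt k, z k - u k⟫ + (r^2*(r-1)/D)*‖u k - zs‖^2 with hVdef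
  -- one-step decrease
  have hstep : ∀ k : ℕ, V (k+1)
      + ((r-1)*(s+2*ρ) - D)*(2*(k:ℝ)+r+1)*‖F (z (k+1)) + Gt (k+1)‖^2 ≤ V k := by
    intro k
    have hKnn : (0:ℝ) ≤ (k:ℝ) := Nat.cast_nonneg k
    -- scalar expansions
    have eA : ⟪(F (z (k+1)) + Gt (k+1)) - (F (z k) + Gt k), z (k+1) - z k⟫
        = -(r/((k:ℝ)+r))*(⟪F (z (k+1)) + Gt (k+1), z k - u k⟫ - ⟪F (z k) + Gt k, z k - u k⟫)
          - s*(⟪F (z (k+1)) + Gt (k+1), F (zh k) + Gt (k+1)⟫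
                - ⟪F (z k) + Gt k, F (zh k) + Gt (k+1)⟫)
          - 2*ρ*((k:ℝ)/((k:ℝ)+r))*(⟪F (z (k+1)) + Gt (k+1), F (z k) + Gt k⟫
                - ‖F (z k) + Gt k‖^2) := by
      rw [hR1 k]
      simp only [inner_sub_left, inner_sub_right, inner_neg_right, real_inner_smul_right,
        real_inner_self_eq_norm_sq]
      rw [real_inner_comm (F (z k) + Gt k) (F (z (k+1)) + Gt (k+1))]
      ring
    have eN : ‖(F (z (k+1)) + Gt (k+1)) - (F (z k) + Gt k)‖^2
        = ‖F (z (k+1)) + Gt (k+1)‖^2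
          - 2*⟪F (z (k+1)) + Gt (k+1), F (z k) + Gt k⟫ + ‖F (z k) + Gt k‖^2 :=
      norm_sub_sq_real _ _
    have eB : ⟪F (z (k+1)) + Gt (k+1), z (k+1) - zs⟫
        = ((k:ℝ)/((k:ℝ)+r))*⟪F (z (k+1)) + Gt (k+1), z k - u k⟫
          - s*⟪F (z (k+1)) + Gt (k+1), F (zh k) + Gt (k+1)⟫
          - 2*ρ*((k:ℝ)/((k:ℝ)+r))*⟪F (z (k+1)) + Gt (k+1), F (z k) + Gt k⟫
          + ⟪F (z (k+1)) + Gt (k+1), u k - zs⟫ := by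
      rw [hR2 k]
      simp only [inner_add_right, inner_sub_right, real_inner_smul_right]
      ring
    have eW : ⟪F (z (k+1)) + Gt (k+1), z (k+1) - u (k+1)⟫
        = ((k:ℝ)/((k:ℝ)+r))*⟪F (z (k+1)) + Gt (k+1), z k - u k⟫
          - s*⟪F (z (k+1)) + Gt (k+1), F (zh k) + Gt (k+1)⟫
          - 2*ρ*((k:ℝ)/((k:ℝ)+r))*⟪F (z (k+1)) + Gt (k+1), F (z k) + Gt k⟫
          + (D/r)*‖F (z (k+1)) + Gt (k+1)‖^2 := by
      rw [hR3 k, ← real_inner_self_eq_norm_sq]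
      simp only [inner_add_right, inner_sub_right, real_inner_smul_right]
      ring
    have eV : ‖u (k+1) - zs‖^2 = ‖u k - zs‖^2
        - 2*(D/r)*⟪F (z (k+1)) + Gt (k+1), u k - zs⟫
        + (D/r)^2*‖F (z (k+1)) + Gt (k+1)‖^2 := by
      rw [hR4 k, norm_sub_sq_real, real_inner_smul_right, norm_smul, Real.norm_eq_abs,
        abs_of_nonneg (div_pos hD0 hr0).le,
        real_inner_comm (u k - zs) (F (z (k+1)) + Gt (k+1))]
      ring
    have eC1 : ‖(F (z (k+1)) + Gt (k+1)) - (F (zh k) + Gt (k+1))‖^2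
        = ‖F (z (k+1)) + Gt (k+1)‖^2
          - 2*⟪F (z (k+1)) + Gt (k+1), F (zh k) + Gt (k+1)⟫
          + ‖F (zh k) + Gt (k+1)‖^2 := norm_sub_sq_real _ _
    have eC2 : ‖(F (zh k) + Gt (k+1)) - ((k:ℝ)/((k:ℝ)+r)) • (F (z k) + Gt k)‖^2
        = ‖F (zh k) + Gt (k+1)‖^2
          - 2*((k:ℝ)/((k:ℝ)+r))*⟪F (z k) + Gt k, F (zh k) + Gt (k+1)⟫
          + ((k:ℝ)/((k:ℝ)+r))^2*‖F (z k) + Gt k‖^2 := by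
      rw [norm_sub_sq_real, real_inner_smul_right, norm_smul, Real.norm_eq_abs,
        abs_of_nonneg (hkk k).1,
        real_inner_comm (F (zh k) + Gt (k+1)) (F (z k) + Gt k)]
      ring
    -- hypotheses of the scalar core lemma
    have hA : ρ * (‖F (z (k+1)) + Gt (k+1)‖^2
          - 2*⟪F (z (k+1)) + Gt (k+1), F (z k) + Gt k⟫ + ‖F (z k) + Gt k‖^2) ≤
        -(r/((k:ℝ)+r))*(⟪F (z (k+1)) + Gt (k+1), z k - u k⟫ - ⟪F (z k) + Gt k, z k - u k⟫)
          - s*(⟪F (z (k+1)) + Gt (k+1), F (zh k) + Gt (k+1)⟫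
                - ⟪F (z k) + Gt k, F (zh k) + Gt (k+1)⟫)
          - 2*ρ*((k:ℝ)/((k:ℝ)+r))*(⟪F (z (k+1)) + Gt (k+1), F (z k) + Gt k⟫
                - ‖F (z k) + Gt k‖^2) := by
      have h := hc1 k
      rw [eN, eA] at h
      exact h
    have hB : ρ * ‖F (z (k+1)) + Gt (k+1)‖^2 ≤
        ((k:ℝ)/((k:ℝ)+r))*⟪F (z (k+1)) + Gt (k+1), z k - u k⟫
          - s*⟪F (z (k+1)) + Gt (k+1), F (zh k) + Gt (k+1)⟫
          - 2*ρ*((k:ℝ)/((k:ℝ)+r))*⟪F (z (k+1)) + Gt (k+1), F (z k) + Gt k⟫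
          + ⟪F (z (k+1)) + Gt (k+1), u k - zs⟫ := by
      have h := hc2 (k+1)
      rw [eB] at h
      push_cast at h ⊢
      exact h
    have hC : ‖F (z (k+1)) + Gt (k+1)‖^2
          - 2*⟪F (z (k+1)) + Gt (k+1), F (zh k) + Gt (k+1)⟫ + ‖F (zh k) + Gt (k+1)‖^2 ≤
        ‖F (zh k) + Gt (k+1)‖^2
          - 2*((k:ℝ)/((k:ℝ)+r))*⟪F (z k) + Gt k, F (zh k) + Gt (k+1)⟫
          + ((k:ℝ)/((k:ℝ)+r))^2*‖F (z k) + Gt k‖^2 := by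
      have h := hlip2 k
      have h2 : ‖(F (z (k+1)) + Gt (k+1)) - (F (zh k) + Gt (k+1))‖^2 ≤
          ‖(F (zh k) + Gt (k+1)) - ((k:ℝ)/((k:ℝ)+r)) • (F (z k) + Gt k)‖^2 := by
        have hn : (0:ℝ) ≤ ‖(F (z (k+1)) + Gt (k+1)) - (F (zh k) + Gt (k+1))‖ := norm_nonneg _
        nlinarith
      rw [eC1, eC2] at h2
      exact h2
    have core := sfbs_core (k:ℝ) r s ρ D
      (‖F (z k) + Gt k‖^2) (⟪F (z (k+1)) + Gt (k+1), F (z k) + Gt k⟫)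
      (⟪F (z k) + Gt k, F (zh k) + Gt (k+1)⟫) (⟪F (z k) + Gt k, z k - u k⟫)
      (‖F (z (k+1)) + Gt (k+1)‖^2) (⟪F (z (k+1)) + Gt (k+1), F (zh k) + Gt (k+1)⟫)
      (⟪F (z (k+1)) + Gt (k+1), z k - u k⟫) (⟪F (z (k+1)) + Gt (k+1), u k - zs⟫)
      (‖F (zh k) + Gt (k+1)‖^2) (‖u k - zs‖^2)
      hKnn hr hs' hD0 hA hB hC
    rw [hVdef]
    simp only
    rw [eW, eV]
    push_cast
    linarith
  -- nonnegativity of the Lyapunov function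
  have hVpos : ∀ k : ℕ, 0 ≤ V k := by
    intro k
    have hKnn : (0:ℝ) ≤ (k:ℝ) := Nat.cast_nonneg k
    have h := hc2 k
    have esplit : ⟪F (z k) + Gt k, z k - zs⟫
        = ⟪F (z k) + Gt k, z k - u k⟫ + ⟪F (z k) + Gt k, u k - zs⟫ := by
      rw [show z k - zs = (z k - u k) + (u k - zs) by abel, inner_add_right]
    have cs : |⟪F (z k) + Gt k, u k - zs⟫| ≤ ‖F (z k) + Gt k‖ * ‖u k - zs‖ :=
      abs_real_inner_le_norm _ _
    have cs' : ⟪F (z k) + Gt k, u k - zs⟫ ≤ ‖F (z k) + Gt k‖ * ‖u k - zs‖ :=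
      le_of_abs_le cs
    have hxw : ρ*‖F (z k) + Gt k‖^2 - ‖F (z k) + Gt k‖ * ‖u k - zs‖ ≤
        ⟪F (z k) + Gt k, z k - u k⟫ := by
      rw [esplit] at h
      linarith
    have hg1 : (0:ℝ) ≤ (s+2*ρ)*(r^2*(r-1)/D) - r^2 := by
      have h1 : (1:ℝ) ≤ (s+2*ρ)*(r-1)/D := by
        rw [le_div_iff₀ hD0]
        nlinarith
      have h2 : (s+2*ρ)*(r^2*(r-1)/D) = r^2 * ((s+2*ρ)*(r-1)/D) := by
        field_simp
      nlinarith [sq_nonneg r]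
    rw [hVdef]
    simp only
    nlinarith [sq_nonneg ((r^2*(r-1)/D)*‖u k - zs‖ - r*(k:ℝ)*‖F (z k) + Gt k‖),
      mul_nonneg (mul_nonneg hg1 (sq_nonneg ((k:ℝ)))) (sq_nonneg (‖F (z k) + Gt k‖)),
      mul_nonneg (mul_nonneg (mul_nonneg (by linarith : (0:ℝ) ≤ 2*r) hKnn)
        (norm_nonneg (F (z k) + Gt k))) (norm_nonneg (u k - zs)),
      mul_le_mul_of_nonneg_left hxw (mul_nonneg (by linarith : (0:ℝ) ≤ 2*r) hKnn),
      norm_nonneg (F (z k) + Gt k), norm_nonneg (u k - zs),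
      div_pos (mul_pos (pow_pos hr0 2) (by linarith : (0:ℝ) < r-1)) hD0]
  -- telescoping bound
  have htel : ∀ N : ℕ, ∑ k ∈ Finset.range N,
      ((r-1)*(s+2*ρ) - D)*(2*(k:ℝ)+r+1)*‖F (z (k+1)) + Gt (k+1)‖^2 ≤ V 0 := by
    intro N
    have main : ∀ N : ℕ, ∑ k ∈ Finset.range N,
        ((r-1)*(s+2*ρ) - D)*(2*(k:ℝ)+r+1)*‖F (z (k+1)) + Gt (k+1)‖^2 + V N ≤ V 0 := by
      intro N
      induction N with
      | zero => simp
      | succ n ih =>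
        rw [Finset.sum_range_succ]
        have h := hstep n
        linarith
    have h := main N
    have h2 := hVpos N
    linarith
  have hcpos : (0:ℝ) < (r-1)*(s+2*ρ) - D := by linarith
  -- summability of (k+1)‖T_{k+1}‖²
  have S1 : Summable (fun k : ℕ => ((k:ℝ)+1)*‖F (z (k+1)) + Gt (k+1)‖^2) := by
    apply summable_of_sum_range_le (c := (1/((r-1)*(s+2*ρ) - D)) * V 0)
    · intro k
      positivity
    · intro n
      have h1 : ∑ k ∈ Finset.range n, ((k:ℝ)+1)*‖F (z (k+1)) + Gt (k+1)‖^2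
          ≤ ∑ k ∈ Finset.range n, (1/((r-1)*(s+2*ρ) - D)) *
              (((r-1)*(s+2*ρ) - D)*(2*(k:ℝ)+r+1)*‖F (z (k+1)) + Gt (k+1)‖^2) := by
        apply Finset.sum_le_sum
        intro k _
        have e : (1/((r-1)*(s+2*ρ) - D)) *
            (((r-1)*(s+2*ρ) - D)*(2*(k:ℝ)+r+1)*‖F (z (k+1)) + Gt (k+1)‖^2)
            = (2*(k:ℝ)+r+1)*‖F (z (k+1)) + Gt (k+1)‖^2 := by
          field_simp
        rw [e]
        have hk1 : ((k:ℝ)+1) ≤ (2*(k:ℝ)+r+1) := by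
          have : (0:ℝ) ≤ (k:ℝ) := Nat.cast_nonneg k
          linarith
        exact mul_le_mul_of_nonneg_right hk1 (by positivity)
      rw [← Finset.mul_sum] at h1
      have h2 := mul_le_mul_of_nonneg_left (htel n)
        (one_div_pos.2 hcpos).le
      linarith
  -- summability of (k+r)-weighted operator norms
  have S3 : Summable (fun k : ℕ => ((k:ℝ)+r)*‖F (z (k+1)) + Gt (k+1)‖^2) := by
    apply Summable.of_nonneg_of_le (fun k => mul_nonneg (hkr k).le (by positivity))
      (f := fun (k : ℕ) => (1+r)*(((k:ℝ)+1)*‖F (z (k+1)) + Gt (k+1)‖^2))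
      (fun k => ?_) (S1.mul_left (1+r))
    have hk : ((k:ℝ)+r) ≤ (1+r)*((k:ℝ)+1) := by
      have : (0:ℝ) ≤ (k:ℝ) := Nat.cast_nonneg k
      nlinarith
    calc ((k:ℝ)+r)*‖F (z (k+1)) + Gt (k+1)‖^2
        ≤ ((1+r)*((k:ℝ)+1))*‖F (z (k+1)) + Gt (k+1)‖^2 :=
          mul_le_mul_of_nonneg_right hk (by positivity)
      _ = (1+r)*(((k:ℝ)+1)*‖F (z (k+1)) + Gt (k+1)‖^2) := by ring
  have S2 : Summable (fun k : ℕ => ((k:ℝ)+r)*‖F (z k) + Gt k‖^2) := by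
    apply (summable_nat_add_iff 1).1
    apply Summable.of_nonneg_of_le (fun k => mul_nonneg (hkr (k+1)).le (by positivity))
      (f := fun (k : ℕ) => (1+r)*(((k:ℝ)+1)*‖F (z (k+1)) + Gt (k+1)‖^2))
      (fun k => ?_) (S1.mul_left (1+r))
    push_cast
    have : (0:ℝ) ≤ (k:ℝ) := Nat.cast_nonneg k
    have hk : ((k:ℝ)+1+r) ≤ (1+r)*((k:ℝ)+1) := by nlinarith
    calc ((k:ℝ)+1+r)*‖F (z (k+1)) + Gt (k+1)‖^2
        ≤ ((1+r)*((k:ℝ)+1))*‖F (z (k+1)) + Gt (k+1)‖^2 :=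
          mul_le_mul_of_nonneg_right hk (by positivity)
      _ = (1+r)*(((k:ℝ)+1)*‖F (z (k+1)) + Gt (k+1)‖^2) := by ring
  -- bound on the half-step operator values
  have hPle : ∀ k : ℕ, ‖F (zh k) + Gt (k+1)‖ ≤
      (‖F (z k) + Gt k‖ + ‖F (z (k+1)) + Gt (k+1)‖)/(1 - L*s) := by
    intro k
    have h := hlip1 k
    have htri : ‖(F (zh k) + Gt (k+1)) - ((k:ℝ)/((k:ℝ)+r)) • (F (z k) + Gt k)‖
        ≤ ‖F (zh k) + Gt (k+1)‖ + ((k:ℝ)/((k:ℝ)+r))*‖F (z k) + Gt k‖ := by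
      calc ‖(F (zh k) + Gt (k+1)) - ((k:ℝ)/((k:ℝ)+r)) • (F (z k) + Gt k)‖
          ≤ ‖F (zh k) + Gt (k+1)‖ + ‖((k:ℝ)/((k:ℝ)+r)) • (F (z k) + Gt k)‖ :=
            norm_sub_le _ _
        _ = ‖F (zh k) + Gt (k+1)‖ + ((k:ℝ)/((k:ℝ)+r))*‖F (z k) + Gt k‖ := by
            rw [norm_smul, Real.norm_eq_abs, abs_of_nonneg (hkk k).1]
    have htri2 : ‖F (zh k) + Gt (k+1)‖ ≤ ‖F (z (k+1)) + Gt (k+1)‖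
        + ‖(F (z (k+1)) + Gt (k+1)) - (F (zh k) + Gt (k+1))‖ := by
      have := norm_sub_norm_le (F (z (k+1)) + Gt (k+1)) (F (zh k) + Gt (k+1))
      linarith [abs_le.1 (abs_norm_sub_norm_le (F (z (k+1)) + Gt (k+1)) (F (zh k) + Gt (k+1)))]
    rw [le_div_iff₀ (by linarith : (0:ℝ) < 1 - L*s)]
    have hc1' : ((k:ℝ)/((k:ℝ)+r)) ≤ 1 := (hkk k).2
    have hc0' : (0:ℝ) ≤ ((k:ℝ)/((k:ℝ)+r)) := (hkk k).1
    have hxnn : (0:ℝ) ≤ ‖F (z k) + Gt k‖ := norm_nonneg _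
    have hpnn : (0:ℝ) ≤ ‖F (zh k) + Gt (k+1)‖ := norm_nonneg _
    have e1 : L*s*‖F (zh k) + Gt (k+1) - ((k:ℝ)/((k:ℝ)+r)) • (F (z k) + Gt k)‖ ≤
        L*s*(‖F (zh k) + Gt (k+1)‖ + (k:ℝ)/((k:ℝ)+r)*‖F (z k) + Gt k‖) :=
      mul_le_mul_of_nonneg_left htri hLs0
    have e2 : L*s*((k:ℝ)/((k:ℝ)+r)*‖F (z k) + Gt k‖) ≤ L*s*‖F (z k) + Gt k‖ :=
      mul_le_mul_of_nonneg_left (mul_le_of_le_one_left hxnn hc1') hLs0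
    have e3 : L*s*‖F (z k) + Gt k‖ ≤ ‖F (z k) + Gt k‖ :=
      mul_le_of_le_one_left hxnn hLs.le
    nlinarith [e1, e2, e3, h, htri2]
  -- the error term of the anchored recursion
  have hEle : ∀ k : ℕ, ‖z (k+1) - u (k+1)‖ ≤
      ((k:ℝ)/((k:ℝ)+r))*‖z k - u k‖
        + (s/(1-L*s) + 2*|ρ| + D/r) * (‖F (z k) + Gt k‖ + ‖F (z (k+1)) + Gt (k+1)‖) := by
    intro k
    have hsplit : z (k+1) - u (k+1) = ((k:ℝ)/((k:ℝ)+r)) • (z k - u k)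
        + (- (s • (F (zh k) + Gt (k+1))) - ((2*ρ*(k:ℝ)/((k:ℝ)+r)) • (F (z k) + Gt k))
            + (D/r) • (F (z (k+1)) + Gt (k+1))) := by
      rw [hR3 k]
      abel
    have h1 : ‖z (k+1) - u (k+1)‖ ≤ ((k:ℝ)/((k:ℝ)+r))*‖z k - u k‖
        + (s*‖F (zh k) + Gt (k+1)‖ + |2*ρ*(k:ℝ)/((k:ℝ)+r)| *‖F (z k) + Gt k‖
            + (D/r)*‖F (z (k+1)) + Gt (k+1)‖) := by
      rw [hsplit]
      refine le_trans (norm_add_le _ _) ?_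
      have h2 : ‖- (s • (F (zh k) + Gt (k+1))) - ((2*ρ*(k:ℝ)/((k:ℝ)+r)) • (F (z k) + Gt k))
          + (D/r) • (F (z (k+1)) + Gt (k+1))‖ ≤
          s*‖F (zh k) + Gt (k+1)‖ + |2*ρ*(k:ℝ)/((k:ℝ)+r)| *‖F (z k) + Gt k‖
            + (D/r)*‖F (z (k+1)) + Gt (k+1)‖ := by
        refine le_trans (norm_add_le _ _) ?_
        have h3 := norm_sub_le (- (s • (F (zh k) + Gt (k+1))))
          ((2*ρ*(k:ℝ)/((k:ℝ)+r)) • (F (z k) + Gt k))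
        rw [norm_neg] at h3
        simp only [norm_smul, Real.norm_eq_abs] at h3 ⊢
        rw [abs_of_nonneg (div_pos hD0 hr0).le]
        rw [abs_of_pos hs'] at h3
        linarith
      have h4 : ‖((k:ℝ)/((k:ℝ)+r)) • (z k - u k)‖ = ((k:ℝ)/((k:ℝ)+r))*‖z k - u k‖ := by
        rw [norm_smul, Real.norm_eq_abs, abs_of_nonneg (hkk k).1]
      linarith
    have habs : |2*ρ*(k:ℝ)/((k:ℝ)+r)| ≤ 2*|ρ| := by
      have h5 : |2*ρ*(k:ℝ)/((k:ℝ)+r)| = 2*|ρ| *((k:ℝ)/((k:ℝ)+r)) := by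
        rw [abs_div, abs_of_pos (hkr k), abs_mul, abs_mul, abs_two,
          abs_of_nonneg (Nat.cast_nonneg k : (0:ℝ) ≤ (k:ℝ))]
        ring
      rw [h5]
      have h6 := mul_le_mul_of_nonneg_left (hkk k).2
        (by positivity : (0:ℝ) ≤ 2*|ρ|)
      linarith
    have hP := hPle k
    have hxnn : (0:ℝ) ≤ ‖F (z k) + Gt k‖ := norm_nonneg _
    have hynn : (0:ℝ) ≤ ‖F (z (k+1)) + Gt (k+1)‖ := norm_nonneg _
    have hfrac : (0:ℝ) < 1 - L*s := by linarith
    have h6 : s*‖F (zh k) + Gt (k+1)‖ ≤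
        (s/(1-L*s))*(‖F (z k) + Gt k‖ + ‖F (z (k+1)) + Gt (k+1)‖) := by
      have := mul_le_mul_of_nonneg_left hP hs'.le
      calc s*‖F (zh k) + Gt (k+1)‖
          ≤ s*((‖F (z k) + Gt k‖ + ‖F (z (k+1)) + Gt (k+1)‖)/(1 - L*s)) := this
        _ = (s/(1-L*s))*(‖F (z k) + Gt k‖ + ‖F (z (k+1)) + Gt (k+1)‖) := by
            field_simp
    have h7 := mul_le_mul_of_nonneg_right habs hxnn
    nlinarith [abs_nonneg ρ, mul_nonneg (mul_nonneg (by norm_num : (0:ℝ) ≤ 2) (abs_nonneg ρ)) hynn,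
      mul_nonneg (div_pos hD0 hr0).le hxnn]
  -- summability of the weighted squared error terms
  set C2 : ℝ := s/(1-L*s) + 2*|ρ| + D/r with hC2def
  have hC2pos : 0 < C2 := by
    rw [hC2def]
    have h1 : (0:ℝ) < s/(1-L*s) := div_pos hs' (by linarith)
    have h2 : (0:ℝ) < D/r := div_pos hD0 hr0
    linarith [abs_nonneg ρ]
  have SE : Summable (fun k : ℕ => (((k:ℝ)+r)/r) *
      (C2 * (‖F (z k) + Gt k‖ + ‖F (z (k+1)) + Gt (k+1)‖))^2) := by
    apply Summable.of_nonneg_of_le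
      (fun k => mul_nonneg (div_nonneg (hkr k).le hr0.le) (sq_nonneg _))
      (f := fun (k : ℕ) => (2*C2^2/r) * (((k:ℝ)+r)*‖F (z k) + Gt k‖^2
          + ((k:ℝ)+r)*‖F (z (k+1)) + Gt (k+1)‖^2))
      (fun k => ?_) (((S2.add S3)).mul_left (2*C2^2/r))
    have hxnn : (0:ℝ) ≤ ‖F (z k) + Gt k‖ := norm_nonneg _
    have hynn : (0:ℝ) ≤ ‖F (z (k+1)) + Gt (k+1)‖ := norm_nonneg _
    have hkrnn : (0:ℝ) < (k:ℝ)+r := hkr k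
    beta_reduce
    have hsq : (‖F (z k) + Gt k‖ + ‖F (z (k+1)) + Gt (k+1)‖)^2 ≤
        2*(‖F (z k) + Gt k‖^2 + ‖F (z (k+1)) + Gt (k+1)‖^2) := by
      nlinarith [sq_nonneg (‖F (z k) + Gt k‖ - ‖F (z (k+1)) + Gt (k+1)‖)]
    have e1 : (((k:ℝ)+r)/r) * (C2 * (‖F (z k) + Gt k‖ + ‖F (z (k+1)) + Gt (k+1)‖))^2
        = (C2^2/r) * (((k:ℝ)+r) * (‖F (z k) + Gt k‖ + ‖F (z (k+1)) + Gt (k+1)‖)^2) := by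
      ring
    rw [e1]
    have e2 : (2*C2^2/r) * (((k:ℝ)+r)*‖F (z k) + Gt k‖^2
        + ((k:ℝ)+r)*‖F (z (k+1)) + Gt (k+1)‖^2)
        = (C2^2/r) * (((k:ℝ)+r) * (2*(‖F (z k) + Gt k‖^2 + ‖F (z (k+1)) + Gt (k+1)‖^2))) := by
      ring
    rw [e2]
    apply mul_le_mul_of_nonneg_left _ (div_nonneg (sq_nonneg C2) hr0.le)
    exact mul_le_mul_of_nonneg_left hsq hkrnn.le
  -- summability of the anchored distances
  have Sw : Summable (fun k : ℕ => (r/((k:ℝ)+r))*‖z k - u k‖^2) := by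
    have hT := SE
    apply summable_of_sum_range_le
      (c := ∑' k : ℕ, (((k:ℝ)+r)/r) *
        (C2 * (‖F (z k) + Gt k‖ + ‖F (z (k+1)) + Gt (k+1)‖))^2)
      (fun k => mul_nonneg (div_nonneg hr0.le (hkr k).le) (sq_nonneg _))
    intro n
    have hconv : ∀ k : ℕ, (r/((k:ℝ)+r))*‖z k - u k‖^2 ≤
        ‖z k - u k‖^2 - ‖z (k+1) - u (k+1)‖^2
          + (((k:ℝ)+r)/r) * (C2 * (‖F (z k) + Gt k‖ + ‖F (z (k+1)) + Gt (k+1)‖))^2 := by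
      intro k
      have h := sfbs_conv (k:ℝ) r (‖z k - u k‖)
        (C2 * (‖F (z k) + Gt k‖ + ‖F (z (k+1)) + Gt (k+1)‖)) (‖z (k+1) - u (k+1)‖)
        (Nat.cast_nonneg k) hr0 (norm_nonneg _)
        (mul_nonneg hC2pos.le (add_nonneg (norm_nonneg _) (norm_nonneg _))) (norm_nonneg _) ?_
      · linarith
      · have := hEle k
        rw [hC2def]
        linarith
    have h1 : ∑ k ∈ Finset.range n, (r/((k:ℝ)+r))*‖z k - u k‖^2 ≤
        ∑ k ∈ Finset.range n, (‖z k - u k‖^2 - ‖z (k+1) - u (k+1)‖^2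
          + (((k:ℝ)+r)/r) * (C2 * (‖F (z k) + Gt k‖ + ‖F (z (k+1)) + Gt (k+1)‖))^2) :=
      Finset.sum_le_sum (fun k _ => hconv k)
    rw [Finset.sum_add_distrib] at h1
    have h2 : ∑ k ∈ Finset.range n, (‖z k - u k‖^2 - ‖z (k+1) - u (k+1)‖^2)
        = ‖z 0 - u 0‖^2 - ‖z n - u n‖^2 :=
      Finset.sum_range_sub' (fun k => ‖z k - u k‖^2) n
    have h3 : ‖z 0 - u 0‖^2 = 0 := by
      rw [hu0, sub_self, norm_zero]
      norm_num
    have h4 : ∑ k ∈ Finset.range n,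
        (((k:ℝ)+r)/r) * (C2 * (‖F (z k) + Gt k‖ + ‖F (z (k+1)) + Gt (k+1)‖))^2 ≤
        ∑' k : ℕ, (((k:ℝ)+r)/r) *
          (C2 * (‖F (z k) + Gt k‖ + ‖F (z (k+1)) + Gt (k+1)‖))^2 :=
      Summable.sum_le_tsum (Finset.range n)
        (fun i _ => mul_nonneg (div_nonneg (hkr i).le hr0.le) (sq_nonneg _)) SE
    have h5 : (0:ℝ) ≤ ‖z n - u n‖^2 := by positivity
    linarith
  -- conclusion
  have Sw1 : Summable (fun k : ℕ => (r/(((k:ℝ)+1)+r))*‖z (k+1) - u (k+1)‖^2) := by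
    have h := (summable_nat_add_iff (f := fun k : ℕ => (r/((k:ℝ)+r))*‖z k - u k‖^2) 1).2 Sw
    apply h.congr
    intro k
    push_cast
    ring
  apply Summable.of_nonneg_of_le (fun k => by positivity)
    (f := fun (k : ℕ) => ((1+r)/r)*((r/(((k:ℝ)+1)+r))*‖z (k+1) - u (k+1)‖^2))
    (fun k => ?_) (Sw1.mul_left ((1+r)/r))
  beta_reduce
  have hknn : (0:ℝ) ≤ (k:ℝ) := Nat.cast_nonneg k
  have e1 : ((1+r)/r)*((r/(((k:ℝ)+1)+r))*‖z (k+1) - u (k+1)‖^2)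
      = ((1+r)/(((k:ℝ)+1)+r))*‖z (k+1) - u (k+1)‖^2 := by
    have h1 : ((k:ℝ)+1)+r ≠ 0 := by positivity
    field_simp
  rw [e1, div_le_iff₀ (by positivity : (0:ℝ) < (k:ℝ)+1)]
  have h2 : (1:ℝ) ≤ ((1+r)/(((k:ℝ)+1)+r))*((k:ℝ)+1) := by
    rw [div_mul_eq_mul_div, le_div_iff₀ (by positivity : (0:ℝ) < ((k:ℝ)+1)+r)]
    nlinarith
  nlinarith [sq_nonneg (‖z (k+1) - u (k+1)‖), norm_nonneg (z (k+1) - u (k+1)),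
    mul_le_mul_of_nonneg_left h2 (by positivity : (0:ℝ) ≤ ‖z (k+1) - u (k+1)‖^2)]
end

section
/- Let F : H → H be L-Lipschitz, let G : H → 2^H be maximally monotone, and suppose the sum operator T, defined by T(x) = {F(x) + g : g ∈ G(x)}, is ρ-comonotone with ρ > −1/(2L). Then the operator x ↦ {(1/(2L))·u : u ∈ T(x)} is maximally 2Lρ-comonotone. -/
/-!
Put `γ = 1 / (2L)`. Scaling an operator by `γ` turns `ρ`-comonotonicity into
`2Lρ`-comonotonicity, so it suffices that `T = F + G` is maximally `ρ`-comonotone. For that it is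
enough that `I + γT` is surjective: if `(x, w)` is `ρ`-comonotonically related to the graph of `T`
and `y + γv = x + γw` with `v ∈ T y`, then `(ρ + γ)‖w - v‖² ≤ 0`, so `(x, w) = (y, v)`.
Solving `y + γ(F y + G y) ∋ z` is the fixed-point problem `y = J (z - γ F y)` for the resolvent `J`
of `γG`; it is a contraction with constant `γL = 1/2` since `J` is nonexpansive.

The resolvent exists by Minty's theorem, proved through the Fitzpatrick function: the supremum over
the graph `(y, v)` of `⟪a, v⟫ + ⟪y, b⟫ - ⟪y, v⟫ + ½‖(a, b)‖²` is `1`-strongly convex on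
`H × H`, hence has a minimizer `(a, b)`, and `x = (a - b)/2` satisfies `-x ∈ A x` by maximality.
-/

open RealInnerProductSpace Filter Topology Pointwise Set

section StrongConvexity
variable {ι E : Type*} [NormedAddCommGroup E] [NormedSpace ℝ E] [CompleteSpace E]

theorem exists_minimizer_of_strongConvexOn {m : ℝ} (hm : 0 < m) {g : ι → E → ℝ}
    (hconv : ∀ i, StrongConvexOn univ m (g i)) (hlsc : ∀ i, LowerSemicontinuous (g i))
    (hfin : ∃ p r, ∀ i, g i p ≤ r) (hbdd : ∃ i, BddBelow (range (g i))) :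
    ∃ p₀ μ, (∀ i, g i p₀ ≤ μ) ∧ ∀ p r, (∀ i, g i p ≤ r) → m / 2 * ‖p - p₀‖ ^ 2 ≤ r - μ := by
  set U : Set ℝ := {r | ∃ p, ∀ i, g i p ≤ r}
  have hU : U.Nonempty := by obtain ⟨p, r, h⟩ := hfin; exact ⟨r, p, h⟩
  have hUbdd : BddBelow U := by
    obtain ⟨i, c, hc⟩ := hbdd
    exact ⟨c, fun r ⟨p, hp⟩ => (hc (mem_range_self p)).trans (hp i)⟩
  set μ := sInf U
  have hcomb : ∀ {p p' r r' a b}, (∀ i, g i p ≤ r) → (∀ i, g i p' ≤ r') → 0 ≤ a → 0 ≤ b →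
      a + b = 1 → μ ≤ a * r + b * r' - a * b * (m / 2 * ‖p - p'‖ ^ 2) := by
    intro p p' r r' a b hp hp' ha hb hab
    refine csInf_le hUbdd ⟨a • p + b • p', fun i => ?_⟩
    have := (hconv i).2 (mem_univ p) (mem_univ p') ha hb hab
    simp only [smul_eq_mul] at this
    nlinarith [hp i, hp' i]
  have happrox : ∀ n : ℕ, ∃ p, ∀ i, g i p ≤ μ + 1 / (n + 1) := by
    intro n
    have hε : (0 : ℝ) < 1 / (n + 1) := by positivity
    obtain ⟨r, ⟨p, hp⟩, hr⟩ := (csInf_lt_iff hUbdd hU).1 (lt_add_of_pos_right μ hε)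
    exact ⟨p, fun i => (hp i).trans hr.le⟩
  choose q hq using happrox
  have hq_cauchy : CauchySeq q := by
    refine cauchySeq_of_le_tendsto_0 (fun N : ℕ => √(8 / m * (1 / (N + 1))))
      (fun n k N hn hk => ?_) ?_
    · have h := hcomb (hq n) (hq k) (a := 1 / 2) (b := 1 / 2) (by norm_num) (by norm_num)
        (by norm_num)
      have hn' : 1 / ((n : ℝ) + 1) ≤ 1 / (N + 1) := by gcongr
      have hk' : 1 / ((k : ℝ) + 1) ≤ 1 / (N + 1) := by gcongr
      rw [dist_eq_norm]
      apply Real.le_sqrt_of_sq_le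
      rw [div_mul_eq_mul_div, le_div_iff₀ hm]
      nlinarith
    · simpa using ((tendsto_one_div_add_atTop_nhds_zero_nat).const_mul (8 / m)).sqrt
  obtain ⟨p₀, hp₀⟩ := cauchySeq_tendsto_of_complete hq_cauchy
  have hmin : ∀ i, g i p₀ ≤ μ := by
    intro i
    refine le_of_forall_pos_le_add fun ε hε => ?_
    have hev : ∀ᶠ n : ℕ in atTop, q n ∈ g i ⁻¹' Iic (μ + ε) := by
      filter_upwards [(tendsto_one_div_add_atTop_nhds_zero_nat).eventually (gt_mem_nhds hε)]
        with n hn using (hq n i).trans (by linarith)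
    exact ((hlsc i).isClosed_preimage (μ + ε)).mem_of_tendsto hp₀ hev
  refine ⟨p₀, μ, hmin, fun p r hp => ?_⟩
  have hseg : ∀ a ∈ Ioo (0 : ℝ) 1, a * (m / 2 * ‖p - p₀‖ ^ 2) ≤ r - μ := by
    rintro a ⟨ha₀, ha₁⟩
    have h := hcomb hmin hp ha₀.le (by linarith : 0 ≤ 1 - a) (by ring)
    rw [norm_sub_rev] at h
    nlinarith
  have hlim : Tendsto (fun a : ℝ => a * (m / 2 * ‖p - p₀‖ ^ 2)) (𝓝[<] 1)
      (𝓝 (m / 2 * ‖p - p₀‖ ^ 2)) :=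
    ((continuous_mul_const _).tendsto' 1 _ (one_mul _)).mono_left nhdsWithin_le_nhds
  exact le_of_tendsto hlim (eventually_of_mem (Ioo_mem_nhdsLT zero_lt_one) hseg)
end StrongConvexity

section MonotoneOperators

variable {H : Type*} [NormedAddCommGroup H] [InnerProductSpace ℝ H]

def IsComonotone (ρ : ℝ) (A : H → Set H) : Prop :=
  ∀ x y u v, u ∈ A x → v ∈ A y → ρ * ‖u - v‖ ^ 2 ≤ ⟪u - v, x - y⟫

def IsMaximalComonotone (ρ : ℝ) (A : H → Set H) : Prop :=
  IsComonotone ρ A ∧ ∀ x u, (∀ y v, v ∈ A y → ρ * ‖u - v‖ ^ 2 ≤ ⟪u - v, x - y⟫) → u ∈ A x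

variable {ρ c γ : ℝ} {A G T : H → Set H} {K : NNReal} {F : H → H}

theorem div_mul_norm_smul_sub_sq_le_inner_iff (hc : 0 < c) (x y u v : H) :
    ρ / c * ‖c • u - c • v‖ ^ 2 ≤ ⟪c • u - c • v, x - y⟫ ↔ ρ * ‖u - v‖ ^ 2 ≤ ⟪u - v, x - y⟫ := by
  rw [← smul_sub, norm_smul, real_inner_smul_left, mul_pow, Real.norm_of_nonneg hc.le,
    show ρ / c * (c ^ 2 * ‖u - v‖ ^ 2) = c * (ρ * ‖u - v‖ ^ 2) by field_simp]
  exact mul_le_mul_iff_of_pos_left hc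

theorem IsComonotone.smul (hA : IsComonotone ρ A) (hc : 0 < c) :
    IsComonotone (ρ / c) fun x => c • A x := by
  rintro x y _ _ ⟨u, hu, rfl⟩ ⟨v, hv, rfl⟩
  exact (div_mul_norm_smul_sub_sq_le_inner_iff hc x y u v).2 (hA x y u v hu hv)

theorem IsMaximalComonotone.smul (hA : IsMaximalComonotone ρ A) (hc : 0 < c) :
    IsMaximalComonotone (ρ / c) fun x => c • A x := by
  refine ⟨hA.1.smul hc, fun x u hu => ?_⟩
  have hu' : c • c⁻¹ • u = u := smul_inv_smul₀ hc.ne' u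
  refine hu' ▸ Set.smul_mem_smul_set (hA.2 x _ fun y v hv => ?_)
  rw [← div_mul_norm_smul_sub_sq_le_inner_iff hc, hu']
  exact hu y _ (Set.smul_mem_smul_set hv)

theorem IsMaximalComonotone.vadd_const (hA : IsMaximalComonotone ρ A) (a : H) :
    IsMaximalComonotone ρ fun x => a +ᵥ A x := by
  refine ⟨?_, fun x u hu => ?_⟩
  · rintro x y _ _ ⟨u, hu, rfl⟩ ⟨v, hv, rfl⟩
    simpa only [vadd_eq_add, add_sub_add_left_eq_sub] using hA.1 x y u v hu hv
  · refine ⟨-a + u, hA.2 x _ fun y v hv => ?_, by simp⟩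
    simpa only [neg_add_eq_sub, sub_add_eq_sub_sub] using hu y (a + v) ⟨v, hv, rfl⟩

theorem norm_add_sq_add_norm_add_sq_eq (p q y v : H) :
    ‖p + v‖ ^ 2 + ‖q + y‖ ^ 2 = ‖p + q‖ ^ 2 + ‖y + v‖ ^ 2 - 2 * ⟪q - v, p - y⟫ := by
  simp only [← real_inner_self_eq_norm_sq, inner_add_left, inner_add_right, inner_sub_left,
    inner_sub_right, real_inner_comm]
  ring

theorem four_mul_inner_neg_midpoint_eq (x u y v : H) :
    4 * ⟪-((1 / 2 : ℝ) • (x - u)) - v, (1 / 2 : ℝ) • (x - u) - y⟫ =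
      2 * ‖y + v‖ ^ 2 + ‖x + u‖ ^ 2 - (‖x + v‖ ^ 2 + ‖u + y‖ ^ 2 + ‖y - x‖ ^ 2 + ‖v - u‖ ^ 2) := by
  simp only [← real_inner_self_eq_norm_sq, inner_add_left, inner_add_right, inner_sub_left,
    inner_sub_right, inner_neg_left, real_inner_smul_right, real_inner_comm]
  ring

theorem strongConvexOn_half_norm_add_sq_add_const (w : H) (k : ℝ) :
    StrongConvexOn Set.univ 1 fun p : H => ‖p + w‖ ^ 2 / 2 + k := by
  have h : (fun p : H => ‖p + w‖ ^ 2 / 2 + k - 1 / 2 * ‖p‖ ^ 2) =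
      fun p => innerₗ H w p + (‖w‖ ^ 2 / 2 + k) := by
    ext p
    rw [innerₗ_apply_apply, norm_add_sq_real, real_inner_comm]
    ring
  rw [strongConvexOn_iff_convex, h]
  exact ((innerₗ H w).convexOn convex_univ).add_const _

theorem IsComonotone.norm_sub_le_norm_add_smul_sub (hG : IsComonotone 0 G) (hγ : 0 ≤ γ)
    {y y' g g' : H} (hg : g ∈ G y) (hg' : g' ∈ G y') :
    ‖y - y'‖ ≤ ‖(y + γ • g) - (y' + γ • g')‖ := by
  have hmono : 0 ≤ ⟪g - g', y - y'⟫ := by simpa using hG y y' g g' hg hg'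
  have hsq : ‖y - y'‖ ^ 2 ≤ ⟪y - y', (y + γ • g) - (y' + γ • g')⟫ := by
    rw [show (y + γ • g) - (y' + γ • g') = (y - y') + γ • (g - g') by module, inner_add_right,
      real_inner_self_eq_norm_sq, real_inner_smul_right, real_inner_comm]
    nlinarith
  nlinarith [real_inner_le_norm (y - y') ((y + γ • g) - (y' + γ • g')), norm_nonneg (y - y'),
    norm_nonneg ((y + γ • g) - (y' + γ • g'))]

theorem IsComonotone.isMaximalComonotone_of_forall_exists_add_smul (hT : IsComonotone ρ T)
    (hργ : 0 < ρ + γ) (hsurj : ∀ z, ∃ y, ∃ v ∈ T y, y + γ • v = z) :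
    IsMaximalComonotone ρ T := by
  refine ⟨hT, fun x w hw => ?_⟩
  obtain ⟨y, v, hv, hyv⟩ := hsurj (x + γ • w)
  have hxy : x - y = -(γ • (w - v)) := by rw [← sub_eq_of_eq_add hyv.symm]; module
  have h := hw y v hv
  rw [hxy, inner_neg_right, real_inner_smul_right, real_inner_self_eq_norm_sq] at h
  have hwv : w = v := by
    have hsq : ‖w - v‖ ^ 2 = 0 := le_antisymm (by nlinarith [sq_nonneg ‖w - v‖]) (sq_nonneg _)
    rwa [pow_eq_zero_iff two_ne_zero, norm_eq_zero, sub_eq_zero] at hsq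
  have hxy' : x = y := by rw [← sub_eq_zero, hxy, hwv, sub_self, smul_zero, neg_zero]
  exact hxy' ▸ hwv ▸ hv

variable [CompleteSpace H]

theorem IsMaximalComonotone.exists_neg_mem (hA : IsMaximalComonotone 0 A) : ∃ x, -x ∈ A x := by
  have hmono : ∀ {x y u v}, u ∈ A x → v ∈ A y → 0 ≤ ⟪u - v, x - y⟫ := fun hu hv => by
    simpa using hA.1 _ _ _ _ hu hv
  obtain ⟨y₀, v₀, h₀⟩ : ∃ y v, v ∈ A y := by
    by_contra! h
    exact h 0 0 (hA.2 0 0 fun y v hv => absurd hv (h y v))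
  let ι := {q : H × H // q.2 ∈ A q.1}
  -- at `p = (a, b)` and `i = (y, v)` this is `⟪a, v⟫ + ⟪y, b⟫ - ⟪y, v⟫ + ½‖(a, b)‖²`
  let g : ι → WithLp 2 (H × H) → ℝ := fun i p =>
    ‖p + WithLp.toLp 2 (i.1.2, i.1.1)‖ ^ 2 / 2 + -(‖i.1.1 + i.1.2‖ ^ 2 / 2)
  have hg : ∀ i p,
      g i p = (‖p.fst + i.1.2‖ ^ 2 + ‖p.snd + i.1.1‖ ^ 2 - ‖i.1.1 + i.1.2‖ ^ 2) / 2 := by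
    intro i p
    simp only [g, WithLp.prod_norm_sq_eq_of_L2, WithLp.add_fst, WithLp.add_snd, WithLp.toLp_fst,
      WithLp.toLp_snd]
    ring
  have hgraph : ∀ i j : ι, g j (WithLp.toLp 2 i.1) ≤ ‖i.1.1 + i.1.2‖ ^ 2 / 2 := by
    rintro ⟨⟨p, q⟩, hpq⟩ ⟨⟨y, v⟩, hyv⟩
    rw [hg, WithLp.toLp_fst, WithLp.toLp_snd, norm_add_sq_add_norm_add_sq_eq]
    linarith [hmono hpq hyv]
  obtain ⟨p₀, μ, hμ, hgrowth⟩ := exists_minimizer_of_strongConvexOn one_pos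
    (fun i => strongConvexOn_half_norm_add_sq_add_const _ _)
    (fun i => (by fun_prop : Continuous (g i)).lowerSemicontinuous)
    ⟨_, _, hgraph ⟨(y₀, v₀), h₀⟩⟩
    ⟨⟨(y₀, v₀), h₀⟩, -(‖y₀ + v₀‖ ^ 2 / 2), by
      rintro _ ⟨p, rfl⟩
      exact le_add_of_nonneg_left (by positivity)⟩
  refine ⟨(1 / 2 : ℝ) • (p₀.fst - p₀.snd), hA.2 _ _ fun y v hv => ?_⟩
  have h₁ : (‖p₀.fst + v‖ ^ 2 + ‖p₀.snd + y‖ ^ 2 - ‖y + v‖ ^ 2) / 2 ≤ μ :=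
    (hg ⟨(y, v), hv⟩ p₀).symm.trans_le (hμ _)
  have h₂ : 1 / 2 * (‖y - p₀.fst‖ ^ 2 + ‖v - p₀.snd‖ ^ 2) ≤ ‖y + v‖ ^ 2 / 2 - μ := by
    simpa [WithLp.prod_norm_sq_eq_of_L2] using hgrowth _ _ (hgraph ⟨(y, v), hv⟩)
  have := four_mul_inner_neg_midpoint_eq p₀.fst p₀.snd y v
  rw [zero_mul]
  nlinarith [sq_nonneg ‖p₀.fst + p₀.snd‖]

theorem IsMaximalComonotone.exists_sub_mem (hA : IsMaximalComonotone 0 A) (z : H) :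
    ∃ x, z - x ∈ A x := by
  obtain ⟨x, u, hu, hux⟩ := (hA.vadd_const (-z)).exists_neg_mem
  have hux' : -z + u = -x := hux
  refine ⟨x, ?_⟩
  convert hu using 1
  calc z - x = z + (-z + u) := by rw [hux']; abel
    _ = u := by abel

theorem IsMaximalComonotone.exists_add_smul_mem (hG : IsMaximalComonotone 0 G) (hγ : 0 < γ)
    (z : H) : ∃ y, ∃ g ∈ G y, y + γ • g = z := by
  obtain ⟨y, hy⟩ := (zero_div γ ▸ hG.smul hγ).exists_sub_mem z
  obtain ⟨g, hg, hgy⟩ := hy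
  exact ⟨y, g, hg, by rw [show γ • g = z - y from hgy]; abel⟩

theorem LipschitzWith.exists_add_smul_mem_vadd (hF : LipschitzWith K F)
    (hG : IsMaximalComonotone 0 G) (hγ : 0 < γ) (hγK : γ * K < 1) (z : H) :
    ∃ y, ∃ v ∈ F y +ᵥ G y, y + γ • v = z := by
  choose J g hg hJ using hG.exists_add_smul_mem hγ
  have hJ_lip : LipschitzWith 1 J := LipschitzWith.of_dist_le_mul fun z z' => by
    simpa [dist_eq_norm, hJ] using hG.1.norm_sub_le_norm_add_smul_sub hγ.le (hg z) (hg z')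
  have hstep : LipschitzWith (Real.toNNReal γ * K) fun y => z - γ • F y := by
    refine LipschitzWith.of_dist_le_mul fun y y' => ?_
    rw [dist_eq_norm, sub_sub_sub_cancel_left, ← smul_sub, norm_smul, Real.norm_of_nonneg hγ.le,
      NNReal.coe_mul, Real.coe_toNNReal _ hγ.le, mul_assoc, norm_sub_rev, ← dist_eq_norm]
    exact mul_le_mul_of_nonneg_left (hF.dist_le_mul y y') hγ.le
  have hΦ : ContractingWith (Real.toNNReal γ * K) fun y => J (z - γ • F y) := by
    refine ⟨?_, by simpa only [one_mul, Function.comp_def] using hJ_lip.comp hstep⟩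
    rw [← NNReal.coe_lt_coe, NNReal.coe_mul, Real.coe_toNNReal _ hγ.le]
    exact hγK
  have : Nonempty H := ⟨0⟩
  set y := hΦ.fixedPoint
  have hy : J (z - γ • F y) = y := hΦ.fixedPoint_isFixedPt
  refine ⟨y, F y + g _, Set.vadd_mem_vadd_set (hy ▸ hg (z - γ • F y)), ?_⟩
  calc y + γ • (F y + g _) = (J (z - γ • F y) + γ • g _) + γ • F y := by rw [hy]; module
    _ = z := by rw [hJ]; abel

end MonotoneOperators

/-- If `F` is `L`-Lipschitz, `G` is maximally monotone and `T = F + G` is `ρ`-comonotone with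
`ρ > −1/(2L)`, then `(1/(2L))·T` is maximally `2Lρ`-comonotone. -/
theorem half_invL_sum_maximally_comonotone
    {H : Type*} [NormedAddCommGroup H] [InnerProductSpace ℝ H] [CompleteSpace H]
    (L ρ : ℝ) (F : H → H) (G T S : H → Set H)
    (hL : 0 < L) (hρ : -1/(2*L) < ρ)
    (hLip : ∀ x y : H, ‖F x - F y‖ ≤ L * ‖x - y‖)
    (hGmono : ∀ x y g h : H, g ∈ G x → h ∈ G y → 0 ≤ ⟪g - h, x - y⟫)
    (hGmax : ∀ x u : H, (∀ y h : H, h ∈ G y → 0 ≤ ⟪u - h, x - y⟫) → u ∈ G x)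
    (hT : ∀ x w : H, w ∈ T x ↔ ∃ g ∈ G x, w = F x + g)
    (hTcomono : ∀ x y u v : H, u ∈ T x → v ∈ T y →
      ρ * ‖u - v‖^2 ≤ ⟪u - v, x - y⟫)
    (hS : ∀ x w : H, w ∈ S x ↔ ∃ u ∈ T x, w = (1/(2*L)) • u) :
    (∀ x y u v : H, u ∈ S x → v ∈ S y →
      (2*L*ρ) * ‖u - v‖^2 ≤ ⟪u - v, x - y⟫) ∧
    (∀ x u : H, (∀ y v : H, v ∈ S y → (2*L*ρ) * ‖u - v‖^2 ≤ ⟪u - v, x - y⟫) →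
      u ∈ S x) := by
  have hG : IsMaximalComonotone 0 G :=
    ⟨fun x y g h hg hh => by simpa using hGmono x y g h hg hh,
      fun x u hu => hGmax x u fun y h hh => by simpa using hu y h hh⟩
  have hF : LipschitzWith (Real.toNNReal L) F := LipschitzWith.of_dist_le_mul fun x y => by
    simpa [dist_eq_norm, Real.coe_toNNReal _ hL.le] using hLip x y
  obtain rfl : T = fun x => F x +ᵥ G x := by
    ext x w
    simp only [hT, Set.mem_vadd_set, vadd_eq_add, eq_comm]
  obtain rfl : S = fun x => (1 / (2 * L)) • (F x +ᵥ G x) := by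
    ext x w
    simp only [hS, Set.mem_smul_set, eq_comm]
  have hsurj := hF.exists_add_smul_mem_vadd hG (γ := 1 / (2 * L)) (by positivity) (by
    rw [Real.coe_toNNReal _ hL.le]; field_simp; norm_num)
  have hTmax : IsMaximalComonotone ρ fun x => F x +ᵥ G x :=
    IsComonotone.isMaximalComonotone_of_forall_exists_add_smul hTcomono
      (by rw [neg_div] at hρ; linarith) hsurj
  have hSmax := hTmax.smul (c := 1 / (2 * L)) (by positivity)
  rwa [show ρ / (1 / (2 * L)) = 2 * L * ρ by field_simp] at hSmax
end

section
/- Let T : H → 2^H be a maximally ρ-comonotone operator. If (z_k) and (u_k) are sequences in H with u_k ∈ T(z_k) for every k, u_k → u strongly (in norm), and z_k ⇀ z weakly, then u ∈ T(z). -/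
/-!
Maximality reduces the claim to `ρ‖u - w‖² ≤ ⟪u - w, z - y⟫` for every `w ∈ T y`, which is the
limit of the comonotonicity inequalities `ρ‖v k - w‖² ≤ ⟪v k - w, z k - y⟫`. The right-hand side
pairs a strongly with a weakly convergent sequence, and such pairings converge because weakly
convergent sequences are bounded (uniform boundedness principle).
-/

open RealInnerProductSpace Filter Topology

section

variable {H : Type*} [NormedAddCommGroup H] [InnerProductSpace ℝ H]

def WeakTendsto (z : ℕ → H) (x : H) : Prop :=
  ∀ y : H, Tendsto (fun k => ⟪z k, y⟫) atTop (𝓝 ⟪x, y⟫)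

namespace WeakTendsto

theorem sub_const {z : ℕ → H} {x : H} (h : WeakTendsto z x) (y : H) :
    WeakTendsto (fun k => z k - y) (x - y) := fun w => by
  simpa only [inner_sub_left] using (h w).sub_const ⟪y, w⟫

theorem exists_norm_le [CompleteSpace H] {z : ℕ → H} {x : H} (h : WeakTendsto z x) :
    ∃ C, ∀ k, ‖z k‖ ≤ C := by
  obtain ⟨C, hC⟩ : ∃ C, ∀ k, ‖innerSL ℝ (z k)‖ ≤ C :=
    banach_steinhaus fun y => by
      obtain ⟨C, hC⟩ := (h y).norm.bddAbove_range
      exact ⟨C, fun k => hC ⟨k, rfl⟩⟩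
  exact ⟨C, fun k => by simpa only [innerSL_apply_norm] using hC k⟩

theorem tendsto_inner [CompleteSpace H] {z v : ℕ → H} {x u : H} (hz : WeakTendsto z x)
    (hv : Tendsto v atTop (𝓝 u)) : Tendsto (fun k => ⟪v k, z k⟫) atTop (𝓝 ⟪u, x⟫) := by
  obtain ⟨C, hC⟩ := hz.exists_norm_le
  have hsmall : Tendsto (fun k => ⟪v k - u, z k⟫) atTop (𝓝 0) := by
    have hbound : Tendsto (fun k => ‖v k - u‖ * C) atTop (𝓝 0) := by
      simpa using (hv.sub_const u).norm.mul_const C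
    refine squeeze_zero_norm (fun k => ?_) hbound
    calc ‖⟪v k - u, z k⟫‖ ≤ ‖v k - u‖ * ‖z k‖ := norm_inner_le_norm _ _
      _ ≤ ‖v k - u‖ * C := by gcongr; exact hC k
  have hfixed : Tendsto (fun k => ⟪u, z k⟫) atTop (𝓝 ⟪u, x⟫) := by
    simpa only [real_inner_comm u] using hz u
  simpa only [inner_sub_left, sub_add_cancel, zero_add] using hsmall.add hfixed

end WeakTendsto

end

/-- The graph of a maximally `ρ`-comonotone operator is closed under
strong convergence in the values and weak convergence in the arguments. -/
theorem maximally_comonotone_graph_closed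
    {H : Type*} [NormedAddCommGroup H] [InnerProductSpace ℝ H] [CompleteSpace H]
    (ρ : ℝ) (T : H → Set H)
    (hcomono : ∀ x y u v : H, u ∈ T x → v ∈ T y →
      ρ * ‖u - v‖^2 ≤ ⟪u - v, x - y⟫)
    (hmax : ∀ x u : H, (∀ y v : H, v ∈ T y → ρ * ‖u - v‖^2 ≤ ⟪u - v, x - y⟫) →
      u ∈ T x)
    (z v : ℕ → H) (zlim u : H)
    (hmem : ∀ k : ℕ, v k ∈ T (z k))
    (hstrong : Tendsto v atTop (nhds u))
    (hweak : ∀ y : H, Tendsto (fun k : ℕ => ⟪z k, y⟫) atTop (nhds ⟪zlim, y⟫)) :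
    u ∈ T zlim := by
  refine hmax zlim u fun y w hw => ?_
  have hlhs := ((hstrong.sub_const w).norm.pow 2).const_mul ρ
  have hrhs := (WeakTendsto.sub_const hweak y).tendsto_inner (hstrong.sub_const w)
  exact le_of_tendsto_of_tendsto' hlhs hrhs fun k => hcomono _ _ _ _ (hmem k) hw
end

section
/- Under the SEG+ line-search iteration with r > 1, 0 < D < 2(r−1), L_k > 0, ρ_k > −1/(2L_k), (ρ_k) non-decreasing, α_k = r(1/(2L_k) + ρ_k)/(Σ_k + r(1/(2L_k) + ρ_k)) where Σ_k = ∑_{i=0}^{k−1}(1/(2L_i) + ρ_i), and line-search conditions ⟨(F(z_{k+1}) + G̃_{k+1}) − (F(z_k) + G̃_k), z_{k+1} − z_k⟩ ≥ ρ_k·‖(F(z_{k+1}) + G̃_{k+1}) − (F(z_k) + G̃_k)‖² and ‖F(z_{k+1}) − F(z_{k+1/2})‖ ≤ L_k·‖z_{k+1} − z_{k+1/2}‖ for all k ≥ 0, the Lyapunov function E(k) := D·[Σ_k² − r·ρ_{k−1}·Σ_k]·‖F(z_k) + G̃_k‖² + D·r·Σ_k·⟨F(z_k) + G̃_k, z_k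 − u_k⟩ + ((r³ − r²)/2)·‖u_k − z*‖² (for k ≥ 1; E(0) := ((r³ − r²)/2)·‖u_0 − z*‖²), with z* ∈ H arbitrary, satisfies for all k ≥ 0: E(k+1) − E(k) ≤ −(D/2)·(1/(2L_k) + ρ_k)·(r − 1 − D/2)·[(r−1)(1/(2L_k) + ρ_k) + 2Σ_{k+1}]·‖F(z_{k+1}) + G̃_{k+1}‖² + D(r² − r)·(1/(2L_k) + ρ_k)·(ρ_k·‖F(z_{k+1}) + G̃_{k+1}‖² − ⟨F(z_{k+1}) + G̃_{k+1}, z_{k+1} − z*⟩). -/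
open RealInnerProductSpace Filter

private lemma seg_cancel (a x p1 p2 p3 : ℝ) (ha : 0 < a) (hk : a * x = p1 + p2 - p3)
    (h1 : p1 ≤ 0) (h2 : p2 ≤ 0) (h3 : 0 ≤ p3) : x ≤ 0 := by
  have hax : a * x ≤ a * 0 := by rw [mul_zero]; linarith
  exact le_of_mul_le_mul_left hax ha

set_option maxHeartbeats 2000000 in
private lemma seg_core (r D ρ S a t A X Y Z M1 M0 W1 W0 U1 d2 : ℝ)
    (hr : 1 < r) (hD0 : 0 < D) (hD : D < 2*(r-1))
    (hapos : 0 < a) (haρ : ρ < a) (hS : 0 ≤ S)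
    (ht : t = S + r*a) (hA : A = r*a/t)
    (hX : 0 ≤ X)
    (h1 : ρ*(X - 2*Z + Y) ≤ A*(M1 - M0) - 2*a*(1-A)*(Z-Y) + 2*(a-ρ)*(W1 - W0))
    (h2 : X - 2*(1-A)*Z + (1-A)^2*Y + 2*(W1 - (1-A)*W0) ≤ 0) :
    D*((S+a)^2 - r*ρ*(S+a))*X
      + D*r*(S+a)*((A-1)*M1 - 2*a*(1-A)*Z + 2*(a-ρ)*W1 + (D/r*a)*X)
      + (r^3-r^2)/2*(d2 - 2*((D/r*a)*U1) + (D/r*a)^2*X)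
      - (D*(S^2 - r*ρ*S)*Y - D*r*S*M0 + (r^3-r^2)/2*d2)
    ≤ -(D/2)*a*(r-1-D/2)*((r-1)*a+2*(S+a))*X
      + D*(r^2-r)*a*(ρ*X - ((A-1)*M1 - 2*a*(1-A)*Z + 2*(a-ρ)*W1 + U1)) := by
  have hr0 : r ≠ 0 := by positivity
  have ht0 : (0:ℝ) < t := by nlinarith
  have htne : t ≠ 0 := ne_of_gt ht0
  refine sub_nonpos.mp (seg_cancel a _
    (D*S*t*(ρ*(X - 2*Z + Y) - (A*(M1 - M0) - 2*a*(1-A)*(Z-Y) + 2*(a-ρ)*(W1 - W0))))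
    (D*t^2*(a-ρ)*(X - 2*(1-A)*Z + (1-A)^2*Y + 2*(W1 - (1-A)*W0)))
    (D*a^2*(r-1-D/2)*((1+r)*a/2+S)*X)
    hapos ?_ ?_ ?_ ?_)
  · subst hA; subst ht; field_simp; ring
  · apply mul_nonpos_of_nonneg_of_nonpos
    · positivity
    · linarith
  · apply mul_nonpos_of_nonneg_of_nonpos
    · have : (0:ℝ) ≤ a - ρ := by linarith
      positivity
    · exact h2
  · have h1' : (0:ℝ) ≤ r-1-D/2 := by linarith
    have h2' : (0:ℝ) ≤ (1+r)*a/2+S := by nlinarith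
    exact mul_nonneg (mul_nonneg (mul_nonneg (by positivity : (0:ℝ) ≤ D*a^2) h1') h2') hX

section ExpHelpers
variable {V : Type*} [NormedAddCommGroup V] [InnerProductSpace ℝ V]

private lemma seg_exp1 (g1 g0 m q : V) (α c : ℝ) :
    ⟪g1 - g0, α • m - c • g0 + q⟫
      = α*(⟪g1, m⟫ - ⟪g0, m⟫) - c*(⟪g1, g0⟫ - ‖g0‖^2) + (⟪g1, q⟫ - ⟪g0, q⟫) := by
  simp only [inner_sub_left, inner_add_right, inner_sub_right, real_inner_smul_right,
    real_inner_self_eq_norm_sq]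
  try ring

private lemma seg_exp2 (g1 g0 w : V) (c : ℝ) :
    ‖g1 - c • g0 + w‖^2
      = ‖g1‖^2 - 2*(c*⟪g1, g0⟫) + c^2*‖g0‖^2 + 2*(⟪g1, w⟫ - c*⟪g0, w⟫) + ‖w‖^2 := by
  rw [norm_add_sq_real, norm_sub_sq_real, inner_sub_left, real_inner_smul_left,
    real_inner_smul_right, norm_smul]
  try simp only [Real.norm_eq_abs, mul_pow, sq_abs]
  try ring

private lemma seg_exp3 (g1 m g0 q : V) (α c β : ℝ) :
    ⟪g1, (α-1) • m - c • g0 + q + β • g1⟫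
      = (α-1)*⟪g1, m⟫ - c*⟪g1, g0⟫ + ⟪g1, q⟫ + β*‖g1‖^2 := by
  simp only [inner_add_right, inner_sub_right, real_inner_smul_right,
    real_inner_self_eq_norm_sq]
  try ring

private lemma seg_exp4 (g1 m g0 q d : V) (α c : ℝ) :
    ⟪g1, (α-1) • m - c • g0 + q + d⟫
      = (α-1)*⟪g1, m⟫ - c*⟪g1, g0⟫ + ⟪g1, q⟫ + ⟪g1, d⟫ := by
  simp only [inner_add_right, inner_sub_right, real_inner_smul_right]
  try ring

private lemma seg_exp5 (d g1 : V) (β : ℝ) :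
    ‖d - β • g1‖^2 = ‖d‖^2 - 2*(β*⟪g1, d⟫) + β^2*‖g1‖^2 := by
  rw [norm_sub_sq_real, real_inner_smul_right, real_inner_comm d g1, norm_smul]
  try simp only [Real.norm_eq_abs, mul_pow, sq_abs]
  try ring

end ExpHelpers

set_option maxHeartbeats 4000000 in
/-- Lyapunov estimate for the SEG+ method with line search. -/
theorem seg_line_search_lyapunov
    {H : Type*} [NormedAddCommGroup H] [InnerProductSpace ℝ H] [CompleteSpace H]
    (r D : ℝ) (F : H → H)
    (z zh zt u Gt : ℕ → H) (Lc ρc αc Sig : ℕ → ℝ)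
    (hr : 1 < r) (hD0 : 0 < D) (hD : D < 2*(r - 1))
    (hLk : ∀ k : ℕ, 0 < Lc k)
    (hρk : ∀ k : ℕ, -1/(2*Lc k) < ρc k)
    (hρmono : ∀ k : ℕ, ρc k ≤ ρc (k+1))
    (hSig : ∀ k : ℕ, Sig k = ∑ i ∈ Finset.range k, (1/(2*Lc i) + ρc i))
    (hα : ∀ k : ℕ, αc k =
      r*(1/(2*Lc k) + ρc k) / (Sig k + r*(1/(2*Lc k) + ρc k)))
    (hu0 : u 0 = z 0)
    (hzt : ∀ k : ℕ, zt (k+1) = αc k • u k + (1 - αc k) • z k)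
    (hzh : ∀ k : ℕ, zh k =
      zt (k+1) - ((1 - αc k) * (1/Lc k + 2*ρc k)) • (F (z k) + Gt k))
    (hz : ∀ k : ℕ, z (k+1) = zt (k+1) - (1/Lc k) • (F (zh k) + Gt (k+1))
        - ((1 - αc k) * (2*ρc k)) • (F (z k) + Gt k))
    (hGt : ∀ k : ℕ, Gt (k+1) = Lc k • (zt (k+1) - z (k+1) - (1/Lc k) • F (zh k)
        - ((1 - αc k) * (2*ρc k)) • (F (z k) + Gt k)))
    (hu : ∀ k : ℕ, u (k+1) = u k
        - (D/r * (1/(2*Lc k) + ρc k)) • (F (z (k+1)) + Gt (k+1)))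
    (hls1 : ∀ k : ℕ,
      ρc k * ‖(F (z (k+1)) + Gt (k+1)) - (F (z k) + Gt k)‖^2
        ≤ ⟪(F (z (k+1)) + Gt (k+1)) - (F (z k) + Gt k), z (k+1) - z k⟫)
    (hls2 : ∀ k : ℕ, ‖F (z (k+1)) - F (zh k)‖ ≤ Lc k * ‖z (k+1) - zh k‖)
    (zs : H) (E : ℕ → ℝ)
    (hE0 : E 0 = (r^3 - r^2)/2 * ‖u 0 - zs‖^2)
    (hE : ∀ k : ℕ, E (k+1) =
      D*((Sig (k+1))^2 - r * ρc k * Sig (k+1)) * ‖F (z (k+1)) + Gt (k+1)‖^2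
        + D*r*Sig (k+1) * ⟪F (z (k+1)) + Gt (k+1), z (k+1) - u (k+1)⟫
        + (r^3 - r^2)/2 * ‖u (k+1) - zs‖^2) :
    ∀ k : ℕ, E (k+1) - E k ≤
      -(D/2) * (1/(2*Lc k) + ρc k) * (r - 1 - D/2)
          * ((r - 1)*(1/(2*Lc k) + ρc k) + 2*Sig (k+1))
          * ‖F (z (k+1)) + Gt (k+1)‖^2
        + D*(r^2 - r) * (1/(2*Lc k) + ρc k)
          * (ρc k * ‖F (z (k+1)) + Gt (k+1)‖^2
              - ⟪F (z (k+1)) + Gt (k+1), z (k+1) - zs⟫) := by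
  intro k
  have hLpos := hLk k
  have hL0 : Lc k ≠ 0 := ne_of_gt hLpos
  have hr0 : r ≠ 0 := by positivity
  have hap : ∀ i : ℕ, 0 < 1/(2*Lc i) + ρc i := by
    intro i
    have h := hρk i
    rw [neg_div] at h
    linarith
  have hapos := hap k
  have hSnn : 0 ≤ Sig k := by
    rw [hSig k]
    exact Finset.sum_nonneg fun i _ => (hap i).le
  have hSs : Sig (k+1) = Sig k + (1/(2*Lc k) + ρc k) := by
    rw [hSig (k+1), hSig k, Finset.sum_range_succ]
  -- vector identities
  have hVq : z (k+1) - zh k = ((1 - αc k)*(1/Lc k)) • (F (z k) + Gt k)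
      - (1/Lc k) • (F (zh k) + Gt (k+1)) := by
    rw [hz k, hzh k]; module
  have hw : Lc k • (z (k+1) - zh k) = (1 - αc k) • (F (z k) + Gt k) - (F (zh k) + Gt (k+1)) := by
    rw [hVq, smul_sub, smul_smul, smul_smul,
      show Lc k * ((1 - αc k)*(1/Lc k)) = 1 - αc k by field_simp,
      show Lc k * (1/Lc k) = 1 by field_simp, one_smul]
  have hv : F (z (k+1)) - F (zh k)
      = (F (z (k+1)) + Gt (k+1) - (1 - αc k) • (F (z k) + Gt k)) + Lc k • (z (k+1) - zh k) := by
    rw [hw]; abel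
  have h2n : ‖F (z (k+1)) + Gt (k+1) - (1 - αc k) • (F (z k) + Gt k) + Lc k • (z (k+1) - zh k)‖
      ≤ ‖Lc k • (z (k+1) - zh k)‖ := by
    rw [← hv]
    exact (hls2 k).trans_eq (by rw [norm_smul, Real.norm_eq_abs, abs_of_pos hLpos])
  have h2sq : ‖F (z (k+1)) + Gt (k+1) - (1 - αc k) • (F (z k) + Gt k) + Lc k • (z (k+1) - zh k)‖^2
      ≤ ‖Lc k • (z (k+1) - zh k)‖^2 := pow_le_pow_left₀ (norm_nonneg _) h2n 2
  rw [seg_exp2 (F (z (k+1)) + Gt (k+1)) (F (z k) + Gt k) (Lc k • (z (k+1) - zh k)) (1 - αc k)] at h2sq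
  have s2 : ‖F (z (k+1)) + Gt (k+1)‖^2 - 2*(1-αc k)*⟪F (z (k+1)) + Gt (k+1), F (z k) + Gt k⟫ + (1-αc k)^2*‖F (z k) + Gt k‖^2 + 2*(⟪F (z (k+1)) + Gt (k+1), Lc k • (z (k+1) - zh k)⟫ - (1-αc k)*⟪F (z k) + Gt k, Lc k • (z (k+1) - zh k)⟫) ≤ 0 := by
    linarith
  have hdz : z (k+1) - z k = αc k • (u k - z k)
      - ((1-αc k)*(1/Lc k + 2*ρc k)) • (F (z k) + Gt k) + (z (k+1) - zh k) := by
    rw [hz k, hzh k, hzt k]; module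
  have s1 : ρc k * (‖F (z (k+1)) + Gt (k+1)‖^2 - 2*⟪F (z (k+1)) + Gt (k+1), F (z k) + Gt k⟫ + ‖F (z k) + Gt k‖^2) ≤ αc k*(⟪F (z (k+1)) + Gt (k+1), u k - z k⟫ - ⟪F (z k) + Gt k, u k - z k⟫) - 2*(1/(2*Lc k) + ρc k)*(1-αc k)*(⟪F (z (k+1)) + Gt (k+1), F (z k) + Gt k⟫-‖F (z k) + Gt k‖^2) + 2*((1/(2*Lc k) + ρc k)-ρc k)*(⟪F (z (k+1)) + Gt (k+1), Lc k • (z (k+1) - zh k)⟫ - ⟪F (z k) + Gt k, Lc k • (z (k+1) - zh k)⟫) := by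
    have h := hls1 k
    rw [norm_sub_sq_real, hdz,
      seg_exp1 (F (z (k+1)) + Gt (k+1)) (F (z k) + Gt k) (u k - z k) (z (k+1) - zh k) (αc k) ((1-αc k)*(1/Lc k + 2*ρc k))] at h
    have heq : αc k*(⟪F (z (k+1)) + Gt (k+1), u k - z k⟫ - ⟪F (z k) + Gt k, u k - z k⟫) - 2*(1/(2*Lc k) + ρc k)*(1-αc k)*(⟪F (z (k+1)) + Gt (k+1), F (z k) + Gt k⟫-‖F (z k) + Gt k‖^2) + 2*((1/(2*Lc k) + ρc k)-ρc k)*(⟪F (z (k+1)) + Gt (k+1), Lc k • (z (k+1) - zh k)⟫ - ⟪F (z k) + Gt k, Lc k • (z (k+1) - zh k)⟫)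
        = αc k*(⟪F (z (k+1)) + Gt (k+1), u k - z k⟫ - ⟪F (z k) + Gt k, u k - z k⟫) - ((1-αc k)*(1/Lc k + 2*ρc k))*(⟪F (z (k+1)) + Gt (k+1), F (z k) + Gt k⟫ - ‖F (z k) + Gt k‖^2) + (⟪F (z (k+1)) + Gt (k+1), z (k+1) - zh k⟫ - ⟪F (z k) + Gt k, z (k+1) - zh k⟫) := by
      simp only [real_inner_smul_right]
      field_simp
      ring
    linarith
  have hV5 : z (k+1) - u (k+1) = (αc k - 1) • (u k - z k)
      - ((1-αc k)*(1/Lc k + 2*ρc k)) • (F (z k) + Gt k) + (z (k+1) - zh k) + (D/r*(1/(2*Lc k) + ρc k)) • (F (z (k+1)) + Gt (k+1)) := by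
    rw [hu k, hz k, hzh k, hzt k]; module
  have hV6 : z (k+1) - zs = (αc k - 1) • (u k - z k)
      - ((1-αc k)*(1/Lc k + 2*ρc k)) • (F (z k) + Gt k) + (z (k+1) - zh k) + (u k - zs) := by
    rw [hz k, hzh k, hzt k]; module
  have hV7 : u (k+1) - zs = (u k - zs) - (D/r*(1/(2*Lc k) + ρc k)) • (F (z (k+1)) + Gt (k+1)) := by
    rw [hu k]; module
  have sEK1 : E (k+1) = D*((Sig k+(1/(2*Lc k) + ρc k))^2 - r*ρc k*(Sig k+(1/(2*Lc k) + ρc k)))*‖F (z (k+1)) + Gt (k+1)‖^2 + D*r*(Sig k+(1/(2*Lc k) + ρc k))*((αc k-1)*⟪F (z (k+1)) + Gt (k+1), u k - z k⟫ - 2*(1/(2*Lc k) + ρc k)*(1-αc k)*⟪F (z (k+1)) + Gt (k+1), F (z k) + Gt k⟫ + 2*((1/(2*Lc k) + ρc k)-ρc k)*⟪F (z (k+1)) + Gt (k+1), Lc k • (z (k+1) - zh k)⟫ + (D/r*(1/(2*Lc k) + ρc k))*‖F (z (k+1)) + Gt (k+1)‖^2) + (r^3-r^2)/2*(‖u k -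 zs‖^2 - 2*((D/r*(1/(2*Lc k) + ρc k))*⟪F (z (k+1)) + Gt (k+1), u k - zs⟫) + (D/r*(1/(2*Lc k) + ρc k))^2*‖F (z (k+1)) + Gt (k+1)‖^2) := by
    rw [hE k, hSs, hV5,
      seg_exp3 (F (z (k+1)) + Gt (k+1)) (u k - z k) (F (z k) + Gt k) (z (k+1) - zh k) (αc k) ((1-αc k)*(1/Lc k + 2*ρc k)) (D/r*(1/(2*Lc k) + ρc k)),
      hV7, seg_exp5 (u k - zs) (F (z (k+1)) + Gt (k+1)) (D/r*(1/(2*Lc k) + ρc k))]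
    simp only [real_inner_smul_right]
    field_simp
    ring
  have sRHS : -(D/2) * (1/(2*Lc k) + ρc k) * (r - 1 - D/2) * ((r - 1)*(1/(2*Lc k) + ρc k) + 2*Sig (k+1)) * ‖F (z (k+1)) + Gt (k+1)‖^2 + D*(r^2 - r) * (1/(2*Lc k) + ρc k) * (ρc k * ‖F (z (k+1)) + Gt (k+1)‖^2 - ⟪F (z (k+1)) + Gt (k+1), z (k+1) - zs⟫) = -(D/2)*(1/(2*Lc k) + ρc k)*(r-1-D/2)*((r-1)*(1/(2*Lc k) + ρc k)+2*(Sig k+(1/(2*Lc k) + ρc k)))*‖F (z (k+1)) + Gt (k+1)‖^2 + D*(r^2-r)*(1/(2*Lc k) + ρc k)*(ρc k*‖F (z (k+1)) + Gt (k+1)‖^2 - ((αc k-1)*⟪F (z (k+1)) + Gt (k+1), u k - z k⟫ - 2*(1/(2*Lc k) + ρc k)*(1-αc k)*⟪F (z (k+1)) + Gt (k+1), F (z k) + Gt k⟫ + 2*((1/(2*Lc k) + ρc k)-ρc k)*⟪F (z (k+1)) + Gt (k+1), Lc k • (z (k+1) - zh k)⟫ + ⟪F (z (k+1)) + Gt (k+1),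 u k - zs⟫)) := by
    rw [hSs, hV6,
      seg_exp4 (F (z (k+1)) + Gt (k+1)) (u k - z k) (F (z k) + Gt k) (z (k+1) - zh k) (u k - zs) (αc k) ((1-αc k)*(1/Lc k + 2*ρc k))]
    simp only [real_inner_smul_right]
    field_simp
    ring
  have sElow : D*(Sig k^2 - r*ρc k*Sig k)*‖F (z k) + Gt k‖^2 - D*r*Sig k*⟪F (z k) + Gt k, u k - z k⟫ + (r^3-r^2)/2*‖u k - zs‖^2 ≤ E k := by
    cases k with
    | zero =>
        have hS0 : Sig 0 = 0 := by rw [hSig 0]; simp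
        exact le_of_eq (by rw [hS0, hE0]; ring)
    | succ j =>
        have hm : ⟪F (z (j+1)) + Gt (j+1), z (j+1) - u (j+1)⟫
            = -⟪F (z (j+1)) + Gt (j+1), u (j+1) - z (j+1)⟫ := by
          rw [← inner_neg_right]; congr 1; abel
        have hEk := hE j
        rw [hm] at hEk
        have hprod : 0 ≤ D*r*Sig (j+1)*(ρc (j+1) - ρc j)*‖F (z (j+1)) + Gt (j+1)‖^2 :=
          mul_nonneg (mul_nonneg (mul_nonneg (mul_nonneg hD0.le (by linarith : (0:ℝ) ≤ r))
            hSnn) (sub_nonneg.mpr (hρmono j))) (by positivity)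
        linarith
  have hρlt : ρc k < 1/(2*Lc k) + ρc k := by
    have h12 : 0 < 1/(2*Lc k) := by positivity
    linarith
  have hcore := seg_core r D (ρc k) (Sig k) (1/(2*Lc k) + ρc k)
    (Sig k + r*(1/(2*Lc k) + ρc k)) (αc k)
    (‖F (z (k+1)) + Gt (k+1)‖^2) (‖F (z k) + Gt k‖^2) (⟪F (z (k+1)) + Gt (k+1), F (z k) + Gt k⟫) (⟪F (z (k+1)) + Gt (k+1), u k - z k⟫) (⟪F (z k) + Gt k, u k - z k⟫) (⟪F (z (k+1)) + Gt (k+1), Lc k • (z (k+1) - zh k)⟫) (⟪F (z k) + Gt k, Lc k • (z (k+1) - zh k)⟫) (⟪F (z (k+1)) + Gt (k+1), u k - zs⟫) (‖u k - zs‖^2)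
    hr hD0 hD hapos hρlt hSnn rfl (hα k) (by positivity) s1 s2
  linarith
end

section
/- Under the SEG+ line-search iteration satisfying the hypotheses of the line-search Lyapunov theorem (r > 1, 0 < D < 2(r−1), L_k > 0, ρ_k > −1/(2L_k), (ρ_k) non-decreasing, α_k = r(1/(2L_k) + ρ_k)/(Σ_k + r(1/(2L_k) + ρ_k)), and the two line-search termination inequalities for all k), suppose in addition there exists z* ∈ H such that ⟨F(z_{k+1}) + G̃_{k+1}, z_{k+1} − z*⟩ ≥ ρ_k·‖F(z_{k+1}) + G̃_{k+1}‖² for all k ≥ 0. Then for all k ≥ 1: ‖F(z_k) + G̃_k‖² ≤ r²(r−1)² / ((2(r−1)D − D²)·Σ_k²) · ‖z_0 − z*‖², where Σ_k = ∑_{i=0}^{k−1}(1/(2L_i) + ρ_i). -/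
open RealInnerProductSpace Filter

noncomputable def segPhi {H : Type*} [NormedAddCommGroup H] [InnerProductSpace ℝ H]
    (r D Sk ρ : ℝ) (gk wk sk : H) : ℝ :=
  2*D*Sk/(r*(r-1)) * (Sk/r - ρ) * ‖gk‖^2 - 2*D*Sk/(r*(r-1)) * ⟪gk, wk⟫ + ‖sk‖^2

set_option maxHeartbeats 4000000 in
theorem seg_step {H : Type*} [NormedAddCommGroup H] [InnerProductSpace ℝ H]
    (r D S L ρ α : ℝ) (g G h w s : H)
    (hr : 1 < r) (hL : 0 < L) (hapos : 0 < 1/(2*L) + ρ) (hS : 0 ≤ S)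
    (hD0 : 0 < D) (hD : D < 2*(r-1))
    (hα : α = r*(1/(2*L) + ρ) / (S + r*(1/(2*L) + ρ)))
    (hcA : ‖G - h‖ ^ 2 ≤ ‖(1 - α) • g - h‖ ^ 2)
    (hcB : ρ * ‖G - g‖ ^ 2 ≤ ⟪G - g, α • (w : H) - (1/L) • h - ((1 - α) * (2*ρ)) • g⟫)
    (hcC : ρ * ‖G‖ ^ 2 ≤ ⟪G, s - (1 - α) • w - (1/L) • h - ((1 - α) * (2*ρ)) • g⟫) :
    segPhi r D (S + (1/(2*L) + ρ)) ρ G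
        ((1 - α) • w - (D/r * (1/(2*L) + ρ)) • G + (1/L) • h + ((1 - α) * (2*ρ)) • g)
        (s - (D/r * (1/(2*L) + ρ)) • G)
      ≤ segPhi r D S ρ g w s := by
  have hr0 : (0:ℝ) < r := lt_trans one_pos hr
  have hr1 : (0:ℝ) < r - 1 := by linarith
  have hT : (0:ℝ) < S + r*(1/(2*L) + ρ) := by positivity
  have hid : segPhi r D S ρ g w s -
      segPhi r D (S + (1/(2*L) + ρ)) ρ G
        ((1 - α) • w - (D/r * (1/(2*L) + ρ)) • G + (1/L) • h + ((1 - α) * (2*ρ)) • g)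
        (s - (D/r * (1/(2*L) + ρ)) • G)
      = (D*(S + r*(1/(2*L) + ρ))^2*(1/L)/(r^2*(r-1)*(1/(2*L)+ρ)))
          * (‖(1 - α) • g - h‖ ^ 2 - ‖G - h‖ ^ 2)
        + (2*D*S*(S + r*(1/(2*L)+ρ))/(r^2*(r-1)*(1/(2*L)+ρ)))
          * (⟪G - g, α • (w : H) - (1/L) • h - ((1 - α) * (2*ρ)) • g⟫ - ρ * ‖G - g‖ ^ 2)
        + (2*D*(1/(2*L)+ρ)/r)
          * (⟪G, s - (1 - α) • w - (1/L) • h - ((1 - α) * (2*ρ)) • g⟫ - ρ * ‖G‖ ^ 2)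
        + (D*(1/(2*L)+ρ)*(2*(r-1) - D)*(2*S + (r+1)*(1/(2*L)+ρ))/(r^2*(r-1)))
          * ‖G‖ ^ 2 := by
    simp only [segPhi, ← real_inner_self_eq_norm_sq]
    simp only [inner_sub_left, inner_add_left, real_inner_smul_left]
    simp only [inner_sub_right, inner_add_right, real_inner_smul_right]
    simp only [real_inner_comm G g, real_inner_comm h g, real_inner_comm h G,
      real_inner_comm w g, real_inner_comm w G, real_inner_comm w h,
      real_inner_comm s g, real_inner_comm s G, real_inner_comm s h,
      real_inner_comm s w]
    have hα0 : α ≠ 0 := by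
      rw [hα]; positivity
    have h1 : α * (S + r*(1/(2*L)+ρ)) = r*(1/(2*L)+ρ) := by
      rw [hα, div_mul_cancel₀ _ hT.ne']
    have hS' : S = r*(1/(2*L)+ρ)*(1-α)/α := by
      rw [eq_div_iff hα0]; linear_combination h1
    have hinvL : (1/L : ℝ) = 2*(1/(2*L)+ρ) - 2*ρ := by
      ring
    rw [hinvL, hS']
    generalize (1/(2*L)+ρ : ℝ) = a at hapos ⊢
    field_simp
    ring
  have hlamA : (0:ℝ) ≤ D*(S + r*(1/(2*L) + ρ))^2*(1/L)/(r^2*(r-1)*(1/(2*L)+ρ)) := by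
    positivity
  have hlamB : (0:ℝ) ≤ 2*D*S*(S + r*(1/(2*L)+ρ))/(r^2*(r-1)*(1/(2*L)+ρ)) := by
    positivity
  have hlamC : (0:ℝ) ≤ 2*D*(1/(2*L)+ρ)/r := by positivity
  have hQ : (0:ℝ) ≤ D*(1/(2*L)+ρ)*(2*(r-1) - D)*(2*S + (r+1)*(1/(2*L)+ρ))/(r^2*(r-1)) := by
    have h1 : (0:ℝ) < 2*(r-1) - D := by linarith
    positivity
  have hA' : (0:ℝ) ≤ ‖(1 - α) • g - h‖ ^ 2 - ‖G - h‖ ^ 2 := by linarith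
  have hB' : (0:ℝ) ≤ ⟪G - g, α • (w : H) - (1/L) • h - ((1 - α) * (2*ρ)) • g⟫
      - ρ * ‖G - g‖ ^ 2 := by linarith
  have hC' : (0:ℝ) ≤ ⟪G, s - (1 - α) • w - (1/L) • h - ((1 - α) * (2*ρ)) • g⟫
      - ρ * ‖G‖ ^ 2 := by linarith
  nlinarith [hid, mul_nonneg hlamA hA', mul_nonneg hlamB hB', mul_nonneg hlamC hC',
    mul_nonneg hQ (sq_nonneg ‖G‖)]

set_option maxHeartbeats 1000000 in
/-- Convergence rate of the SEG+ method with line search under a star-comonotonicity condition. -/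
theorem seg_line_search_rate
    {H : Type*} [NormedAddCommGroup H] [InnerProductSpace ℝ H] [CompleteSpace H]
    (r D : ℝ) (F : H → H)
    (z zh zt u Gt : ℕ → H) (Lc ρc αc Sig : ℕ → ℝ)
    (hr : 1 < r) (hD0 : 0 < D) (hD : D < 2*(r - 1))
    (hLk : ∀ k : ℕ, 0 < Lc k)
    (hρk : ∀ k : ℕ, -1/(2*Lc k) < ρc k)
    (hρmono : ∀ k : ℕ, ρc k ≤ ρc (k+1))
    (hSig : ∀ k : ℕ, Sig k = ∑ i ∈ Finset.range k, (1/(2*Lc i) + ρc i))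
    (hα : ∀ k : ℕ, αc k =
      r*(1/(2*Lc k) + ρc k) / (Sig k + r*(1/(2*Lc k) + ρc k)))
    (hu0 : u 0 = z 0)
    (hzt : ∀ k : ℕ, zt (k+1) = αc k • u k + (1 - αc k) • z k)
    (hzh : ∀ k : ℕ, zh k =
      zt (k+1) - ((1 - αc k) * (1/Lc k + 2*ρc k)) • (F (z k) + Gt k))
    (hz : ∀ k : ℕ, z (k+1) = zt (k+1) - (1/Lc k) • (F (zh k) + Gt (k+1))
        - ((1 - αc k) * (2*ρc k)) • (F (z k) + Gt k))
    (hGt : ∀ k : ℕ, Gt (k+1) = Lc k • (zt (k+1) - z (k+1) - (1/Lc k) • F (zh k)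
        - ((1 - αc k) * (2*ρc k)) • (F (z k) + Gt k)))
    (hu : ∀ k : ℕ, u (k+1) = u k
        - (D/r * (1/(2*Lc k) + ρc k)) • (F (z (k+1)) + Gt (k+1)))
    (hls1 : ∀ k : ℕ,
      ρc k * ‖(F (z (k+1)) + Gt (k+1)) - (F (z k) + Gt k)‖^2
        ≤ ⟪(F (z (k+1)) + Gt (k+1)) - (F (z k) + Gt k), z (k+1) - z k⟫)
    (hls2 : ∀ k : ℕ, ‖F (z (k+1)) - F (zh k)‖ ≤ Lc k * ‖z (k+1) - zh k‖)
    (zs : H)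
    (hstar : ∀ k : ℕ,
      ρc k * ‖F (z (k+1)) + Gt (k+1)‖^2
        ≤ ⟪F (z (k+1)) + Gt (k+1), z (k+1) - zs⟫) :
    ∀ k : ℕ, 1 ≤ k →
      ‖F (z k) + Gt k‖^2
        ≤ r^2*(r-1)^2 / ((2*(r-1)*D - D^2) * (Sig k)^2) * ‖z 0 - zs‖^2 := by
  have hr0 : (0:ℝ) < r := lt_trans one_pos hr
  have hr1 : (0:ℝ) < r - 1 := by linarith
  have hapos : ∀ k : ℕ, 0 < 1/(2*Lc k) + ρc k := by
    intro k
    have h1 := hρk k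
    rw [neg_div] at h1
    linarith
  have hSig0 : ∀ k : ℕ, 0 ≤ Sig k := by
    intro k
    rw [hSig]
    exact Finset.sum_nonneg fun i _ => le_of_lt (hapos i)
  -- one-step descent of the Lyapunov function
  have key : ∀ k : ℕ,
      segPhi r D (Sig (k+1)) (ρc k) (F (z (k+1)) + Gt (k+1))
        (u (k+1) - z (k+1)) (u (k+1) - zs)
      ≤ segPhi r D (Sig k) (ρc k) (F (z k) + Gt k) (u k - z k) (u k - zs) := by
    intro k
    set g := F (z k) + Gt k with hg
    set G := F (z (k+1)) + Gt (k+1) with hG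
    set h := F (zh k) + Gt (k+1) with hh
    have hu' : u (k+1) = u k - (D/r * (1/(2*Lc k) + ρc k)) • G := by
      rw [hu k, hG]
    have hz' : z (k+1) = αc k • u k + (1 - αc k) • z k - (1/Lc k) • h
        - ((1 - αc k)*(2*ρc k)) • g := by
      rw [hz k, hzt k, hh, hg]
    have f1 : z (k+1) - z k = αc k • (u k - z k) - (1/Lc k) • h
        - ((1 - αc k) * (2*ρc k)) • g := by
      rw [hz']; module
    have f2 : z (k+1) - zh k = (1/Lc k) • ((1 - αc k) • g - h) := by
      rw [hz', hzh k, hzt k]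
      simp only [hg, hh]
      have hco : (1 - αc k) * (1/Lc k + 2*ρc k) - (1 - αc k)*(2*ρc k)
          = (1/Lc k) * (1 - αc k) := by ring
      module
    have f5 : z (k+1) - zs = (u k - zs) - (1 - αc k) • (u k - z k) - (1/Lc k) • h
        - ((1 - αc k) * (2*ρc k)) • g := by
      rw [hz']; module
    have f3 : u (k+1) - z (k+1) = (1 - αc k) • (u k - z k)
        - (D/r * (1/(2*Lc k) + ρc k)) • G + (1/Lc k) • h
        + ((1 - αc k) * (2*ρc k)) • g := by
      rw [hu', hz']; module
    have f4 : u (k+1) - zs = (u k - zs) - (D/r * (1/(2*Lc k) + ρc k)) • G := by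
      rw [hu', sub_right_comm]
    have hcB := hls1 k
    rw [← hG, ← hg, f1] at hcB
    have hcC := hstar k
    rw [← hG, f5] at hcC
    have hcA : ‖G - h‖^2 ≤ ‖(1 - αc k) • g - h‖^2 := by
      have h2 := hls2 k
      have eGh : G - h = F (z (k+1)) - F (zh k) := by
        rw [hG, hh]; abel
      rw [f2, ← eGh, norm_smul, Real.norm_eq_abs,
        abs_of_pos (one_div_pos.mpr (hLk k))] at h2
      have h3 : Lc k * (1/Lc k * ‖(1 - αc k) • g - h‖) = ‖(1 - αc k) • g - h‖ := by
        field_simp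
        exact mul_div_cancel_left₀ _ (hLk k).ne'
      rw [h3] at h2
      exact pow_le_pow_left₀ (norm_nonneg _) h2 2
    have hS' : Sig (k+1) = Sig k + (1/(2*Lc k) + ρc k) := by
      rw [hSig, hSig, Finset.sum_range_succ]
    rw [hS', f3, f4]
    exact seg_step r D (Sig k) (Lc k) (ρc k) (αc k) g G h (u k - z k) (u k - zs)
      hr (hLk k) (hapos k) (hSig0 k) hD0 hD (hα k) hcA hcB hcC
  -- monotonicity in ρ
  have mono : ∀ (Sk ρ₁ ρ₂ : ℝ) (gk wk sk : H), ρ₁ ≤ ρ₂ → 0 ≤ Sk →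
      segPhi r D Sk ρ₂ gk wk sk ≤ segPhi r D Sk ρ₁ gk wk sk := by
    intro Sk ρ₁ ρ₂ gk wk sk hρ hSk
    have hB : (0:ℝ) ≤ 2*D*Sk/(r*(r-1)) := by positivity
    have h1 : (Sk/r - ρ₂) * ‖gk‖^2 ≤ (Sk/r - ρ₁) * ‖gk‖^2 :=
      mul_le_mul_of_nonneg_right (by linarith) (sq_nonneg _)
    have h2 := mul_le_mul_of_nonneg_left h1 hB
    simp only [segPhi]
    nlinarith [h2]
  -- telescoped bound
  have bound : ∀ m : ℕ,
      segPhi r D (Sig (m+1)) (ρc m) (F (z (m+1)) + Gt (m+1))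
        (u (m+1) - z (m+1)) (u (m+1) - zs) ≤ ‖z 0 - zs‖^2 := by
    intro m
    induction m with
    | zero =>
      have h0 : Sig 0 = 0 := by rw [hSig]; simp
      have hend : segPhi r D (Sig 0) (ρc 0) (F (z 0) + Gt 0) (u 0 - z 0) (u 0 - zs)
          = ‖z 0 - zs‖^2 := by
        simp [segPhi, h0, hu0]
      calc segPhi r D (Sig 1) (ρc 0) (F (z 1) + Gt 1) (u 1 - z 1) (u 1 - zs)
          ≤ segPhi r D (Sig 0) (ρc 0) (F (z 0) + Gt 0) (u 0 - z 0) (u 0 - zs) := key 0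
        _ = ‖z 0 - zs‖^2 := hend
    | succ n ih =>
      calc segPhi r D (Sig (n+2)) (ρc (n+1)) (F (z (n+2)) + Gt (n+2))
            (u (n+2) - z (n+2)) (u (n+2) - zs)
          ≤ segPhi r D (Sig (n+1)) (ρc (n+1)) (F (z (n+1)) + Gt (n+1))
            (u (n+1) - z (n+1)) (u (n+1) - zs) := key (n+1)
        _ ≤ segPhi r D (Sig (n+1)) (ρc n) (F (z (n+1)) + Gt (n+1))
            (u (n+1) - z (n+1)) (u (n+1) - zs) :=
            mono _ _ _ _ _ _ (hρmono n) (hSig0 (n+1))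
        _ ≤ ‖z 0 - zs‖^2 := ih
  -- conclusion
  intro k hk
  obtain ⟨m, rfl⟩ : ∃ m, k = m + 1 := ⟨k - 1, (Nat.succ_pred_eq_of_pos hk).symm⟩
  have hP := bound m
  simp only [segPhi] at hP
  have hw : u (m+1) - z (m+1) = (u (m+1) - zs) - (z (m+1) - zs) := by abel
  rw [hw, inner_sub_right] at hP
  have hstar' := hstar m
  have hBpos : (0:ℝ) ≤ 2*D*Sig (m+1)/(r*(r-1)) := by
    have := hSig0 (m+1); positivity
  have h1 := mul_le_mul_of_nonneg_left hstar' hBpos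
  have hexp : ‖(2*D*Sig (m+1)/(r*(r-1))/2) • (F (z (m+1)) + Gt (m+1)) - (u (m+1) - zs)‖^2
      = (2*D*Sig (m+1)/(r*(r-1))/2)^2 * ‖F (z (m+1)) + Gt (m+1)‖^2
        - 2*D*Sig (m+1)/(r*(r-1)) * ⟪F (z (m+1)) + Gt (m+1), u (m+1) - zs⟫
        + ‖u (m+1) - zs‖^2 := by
    rw [@norm_sub_sq_real, norm_smul, Real.norm_eq_abs, real_inner_smul_left,
      mul_pow, sq_abs]
    ring
  have h2 : 2*D*Sig (m+1)/(r*(r-1)) * ⟪F (z (m+1)) + Gt (m+1), u (m+1) - zs⟫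
      ≤ (2*D*Sig (m+1)/(r*(r-1))/2)^2 * ‖F (z (m+1)) + Gt (m+1)‖^2
        + ‖u (m+1) - zs‖^2 := by
    nlinarith [sq_nonneg ‖(2*D*Sig (m+1)/(r*(r-1))/2) • (F (z (m+1)) + Gt (m+1)) - (u (m+1) - zs)‖, hexp]
  have main2 : 2*D*Sig (m+1)/(r*(r-1)) * (Sig (m+1)/r) * ‖F (z (m+1)) + Gt (m+1)‖^2
      - (2*D*Sig (m+1)/(r*(r-1))/2)^2 * ‖F (z (m+1)) + Gt (m+1)‖^2
      ≤ ‖z 0 - zs‖^2 := by nlinarith [hP, h1, h2]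
  have hSpos : 0 < Sig (m+1) := by
    rw [hSig]
    exact Finset.sum_pos (fun i _ => hapos i)
      (Finset.nonempty_range_iff.mpr (Nat.succ_ne_zero m))
  have hcoef : (2*(r-1)*D - D^2) * (Sig (m+1))^2 * ‖F (z (m+1)) + Gt (m+1)‖^2
      = r^2*(r-1)^2 * (2*D*Sig (m+1)/(r*(r-1)) * (Sig (m+1)/r) * ‖F (z (m+1)) + Gt (m+1)‖^2
        - (2*D*Sig (m+1)/(r*(r-1))/2)^2 * ‖F (z (m+1)) + Gt (m+1)‖^2) := by
    field_simp
  have main4 : (2*(r-1)*D - D^2) * (Sig (m+1))^2 * ‖F (z (m+1)) + Gt (m+1)‖^2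
      ≤ r^2*(r-1)^2 * ‖z 0 - zs‖^2 := by
    rw [hcoef]
    exact mul_le_mul_of_nonneg_left main2 (by positivity)
  have hden : (0:ℝ) < (2*(r-1)*D - D^2) * (Sig (m+1))^2 := by
    have hnum : (0:ℝ) < 2*(r-1)*D - D^2 := by nlinarith
    exact mul_pos hnum (pow_pos hSpos 2)
  rw [div_mul_eq_mul_div, le_div_iff₀ hden]
  nlinarith [main4]
end

section
/- (Lyapunov function for SEG) Let sequences be generated by the general symplectic extra-gradient iteration with F monotone and L-Lipschitz and parameter sequences (α_k) in (0,1), (β_k), (C_k), and positive (A_k), (B_k) satisfying: A_k = B_k·β_k/α_k; B_{k+1} = B_k/(1 − α_k); β_{k+1} + 2C_k·α_{k+1} = β_k·α_{k+1}·(1 − L²β_k² − α_k²) / (α_k·(1 − α_k)·(1 − L²β_k²)); and β_k ∈ (0, 1/L) for all k ≥ 0. Then the sequence E(k) := (A_k/2)·‖F(z_k)‖² + B_k·⟨F(z_k), z_k − u_k⟩ is non-increasing; indeed E(k+1) − E(k) ≤ −(A_k/(2L²β_k²))·‖((1 − L²β_k² − α_k)/((1 − α_k)·√(1 − L²β_k²)))·F(z_{k+1})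 − √(1 − L²β_k²)·F(z_{k+1/2})‖² ≤ 0 for all k ≥ 0. -/
open RealInnerProductSpace Filter

set_option maxHeartbeats 1600000 in
/-- The Lyapunov function of the general symplectic extra-gradient (SEG) method is
non-increasing, with quantitative decrease. -/
theorem seg_lyapunov_nonincreasing
    {H : Type*} [NormedAddCommGroup H] [InnerProductSpace ℝ H] [CompleteSpace H]
    (L : ℝ) (F : H → H)
    (z zh zt u : ℕ → H) (α β Cc A B : ℕ → ℝ)
    (hL : 0 < L)
    (hLip : ∀ x y : H, ‖F x - F y‖ ≤ L * ‖x - y‖)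
    (hmono : ∀ x y : H, 0 ≤ ⟪F x - F y, x - y⟫)
    (hα : ∀ k : ℕ, α k ∈ Set.Ioo (0 : ℝ) 1)
    (hApos : ∀ k : ℕ, 0 < A k) (hBpos : ∀ k : ℕ, 0 < B k)
    (hA : ∀ k : ℕ, A k = B k * β k / α k)
    (hB : ∀ k : ℕ, B (k+1) = B k / (1 - α k))
    (hβrec : ∀ k : ℕ, β (k+1) + 2 * Cc k * α (k+1) =
      β k * α (k+1) * (1 - L^2*(β k)^2 - (α k)^2)
        / (α k * (1 - α k) * (1 - L^2*(β k)^2)))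
    (hβ : ∀ k : ℕ, β k ∈ Set.Ioo (0 : ℝ) (1/L))
    (hzt : ∀ k : ℕ, zt (k+1) = (1 - α k) • z k + α k • u k)
    (hzh : ∀ k : ℕ, zh k = zt (k+1) - β k • F (z k))
    (hz : ∀ k : ℕ, z (k+1) = zt (k+1) - β k • F (zh k))
    (hu : ∀ k : ℕ, u (k+1) = u k - Cc k • F (z (k+1)))
    (E : ℕ → ℝ)
    (hE : ∀ k : ℕ, E k = (A k / 2) * ‖F (z k)‖^2 + B k * ⟪F (z k), z k - u k⟫) :
    ∀ k : ℕ,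
      (E (k+1) - E k ≤
        -(A k/(2*L^2*(β k)^2)) *
          ‖((1 - L^2*(β k)^2 - α k)/((1 - α k) * Real.sqrt (1 - L^2*(β k)^2)))
              • F (z (k+1))
            - Real.sqrt (1 - L^2*(β k)^2) • F (zh k)‖^2) ∧
      (-(A k/(2*L^2*(β k)^2)) *
          ‖((1 - L^2*(β k)^2 - α k)/((1 - α k) * Real.sqrt (1 - L^2*(β k)^2)))
              • F (z (k+1))
            - Real.sqrt (1 - L^2*(β k)^2) • F (zh k)‖^2 ≤ 0) ∧
      E (k+1) ≤ E k := by
  intro k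
  obtain ⟨ha0, ha1⟩ := hα k
  obtain ⟨ha0', ha1'⟩ := hα (k+1)
  obtain ⟨hb0, hb1⟩ := hβ k
  have hane : α k ≠ 0 := ne_of_gt ha0
  have hane' : α (k+1) ≠ 0 := ne_of_gt ha0'
  have h1a : (0:ℝ) < 1 - α k := by linarith
  have h1ane : (1:ℝ) - α k ≠ 0 := ne_of_gt h1a
  have hLne : L ≠ 0 := ne_of_gt hL
  have hbne : β k ≠ 0 := ne_of_gt hb0
  have hLb : β k * L < 1 := (lt_div_iff₀ hL).mp hb1
  have hw : (0:ℝ) < 1 - L^2*(β k)^2 := by nlinarith [mul_pos hb0 hL, hLb]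
  have hwne : (1:ℝ) - L^2*(β k)^2 ≠ 0 := ne_of_gt hw
  set s := Real.sqrt (1 - L^2*(β k)^2) with hs_def
  have hs2 : s^2 = 1 - L^2*(β k)^2 := Real.sq_sqrt hw.le
  have hs0 : 0 < s := Real.sqrt_pos.mpr hw
  have hsne : s ≠ 0 := ne_of_gt hs0
  -- vector identities
  have hvec1 : z (k+1) - u (k+1)
      = (1 - α k) • (z k - u k) - β k • F (zh k) + Cc k • F (z (k+1)) := by
    rw [hu k, hz k, hzt k]; module
  have hvec3 : z (k+1) - zh k = β k • (F (z k) - F (zh k)) := by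
    rw [hz k, hzh k]; module
  have hvec4 : α k • (z k - u k) = (z k - z (k+1)) - β k • F (zh k) := by
    rw [hz k, hzt k]; module
  -- inner product expansion of E (k+1)
  have hip1 : ⟪F (z (k+1)), z (k+1) - u (k+1)⟫
      = (1 - α k) * ⟪F (z (k+1)), z k - u k⟫
        - β k * ⟪F (z (k+1)), F (zh k)⟫ + Cc k * ‖F (z (k+1))‖^2 := by
    rw [hvec1, inner_add_right, inner_sub_right, real_inner_smul_right,
      real_inner_smul_right, real_inner_smul_right, real_inner_self_eq_norm_sq]
  have hEk1 : E (k+1) = (A (k+1)/2) * ‖F (z (k+1))‖^2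
      + B (k+1) * ((1 - α k) * ⟪F (z (k+1)), z k - u k⟫
        - β k * ⟪F (z (k+1)), F (zh k)⟫ + Cc k * ‖F (z (k+1))‖^2) := by
    rw [hE (k+1), hip1]
  -- monotonicity step
  have hmonos : α k * (⟪F (z (k+1)), z k - u k⟫ - ⟪F (z k), z k - u k⟫)
      ≤ β k * ⟪F (z k), F (zh k)⟫ - β k * ⟪F (z (k+1)), F (zh k)⟫ := by
    have hm := hmono (z (k+1)) (z k)
    have e1 : ⟪F (z (k+1)) - F (z k), α k • (z k - u k)⟫
        = α k * (⟪F (z (k+1)), z k - u k⟫ - ⟪F (z k), z k - u k⟫) := by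
      rw [real_inner_smul_right, inner_sub_left]
    have e2 : ⟪F (z (k+1)) - F (z k), α k • (z k - u k)⟫
        = -⟪F (z (k+1)) - F (z k), z (k+1) - z k⟫
          - β k * (⟪F (z (k+1)), F (zh k)⟫ - ⟪F (z k), F (zh k)⟫) := by
      rw [hvec4]
      simp only [inner_sub_left, inner_sub_right, real_inner_smul_right]
      ring
    rw [e1] at e2
    linarith
  have hstepA : B k * ⟪F (z (k+1)), z k - u k⟫ - B k * ⟪F (z k), z k - u k⟫
      ≤ A k * ⟪F (z k), F (zh k)⟫ - A k * ⟪F (z (k+1)), F (zh k)⟫ := by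
    have h := mul_le_mul_of_nonneg_left hmonos (hBpos k).le
    refine le_of_mul_le_mul_left ?_ ha0
    calc α k * (B k * ⟪F (z (k+1)), z k - u k⟫ - B k * ⟪F (z k), z k - u k⟫)
        = B k * (α k * (⟪F (z (k+1)), z k - u k⟫ - ⟪F (z k), z k - u k⟫)) := by ring
      _ ≤ B k * (β k * ⟪F (z k), F (zh k)⟫ - β k * ⟪F (z (k+1)), F (zh k)⟫) := h
      _ = α k * (A k * ⟪F (z k), F (zh k)⟫ - A k * ⟪F (z (k+1)), F (zh k)⟫) := by
          rw [hA k]; field_simp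
  -- Lipschitz step
  have hlipn : ‖F (z (k+1)) - F (zh k)‖ ≤ L * (β k * ‖F (z k) - F (zh k)‖) := by
    have h := hLip (z (k+1)) (zh k)
    rwa [hvec3, norm_smul, Real.norm_eq_abs, abs_of_pos hb0] at h
  have hexp1 : ‖F (z (k+1)) - F (zh k)‖^2
      = ‖F (z (k+1))‖^2 - 2 * ⟪F (z (k+1)), F (zh k)⟫ + ‖F (zh k)‖^2 :=
    norm_sub_sq_real _ _
  have hexp0 : ‖F (z k) - F (zh k)‖^2
      = ‖F (z k)‖^2 - 2 * ⟪F (z k), F (zh k)⟫ + ‖F (zh k)‖^2 :=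
    norm_sub_sq_real _ _
  have hlipsq : ‖F (z (k+1))‖^2 - 2 * ⟪F (z (k+1)), F (zh k)⟫ + ‖F (zh k)‖^2
      ≤ L^2 * (β k)^2 * (‖F (z k)‖^2 - 2 * ⟪F (z k), F (zh k)⟫ + ‖F (zh k)‖^2) := by
    rw [← hexp1, ← hexp0]
    nlinarith [norm_nonneg (F (z (k+1)) - F (zh k)), norm_nonneg (F (z k) - F (zh k)),
      mul_pos hL hb0]
  have hA0 : (0:ℝ) < A k := hApos k
  have hm : (0:ℝ) < A k/(2*L^2*(β k)^2) := by positivity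
  have hstepB : A k * ⟪F (z k), F (zh k)⟫ - (A k/2) * ‖F (z k)‖^2
      ≤ (A k/2) * ‖F (zh k)‖^2
        - (A k/(2*L^2*(β k)^2)) * (‖F (z (k+1))‖^2
            - 2 * ⟪F (z (k+1)), F (zh k)⟫ + ‖F (zh k)‖^2) := by
    have h := mul_le_mul_of_nonneg_left hlipsq hm.le
    have e : A k/(2*L^2*(β k)^2) * (L^2 * (β k)^2
        * (‖F (z k)‖^2 - 2 * ⟪F (z k), F (zh k)⟫ + ‖F (zh k)‖^2))
        = (A k/2) * (‖F (z k)‖^2 - 2 * ⟪F (z k), F (zh k)⟫ + ‖F (zh k)‖^2) := by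
      field_simp
    rw [e] at h
    linarith
  -- coefficient identity
  have hBk1 : B (k+1) * (1 - α k) = B k := by rw [hB k]; field_simp
  have hBb : B k * β k = A k * α k := by rw [hA k]; field_simp
  have hcoef : A (k+1)/2 + B (k+1) * Cc k
      = A k * ((1 - L^2*(β k)^2) - (α k)^2) / (2*(1 - α k)^2*(1 - L^2*(β k)^2)) := by
    have hb' : β (k+1) = β k * α (k+1) * (1 - L^2*(β k)^2 - (α k)^2)
        / (α k * (1 - α k) * (1 - L^2*(β k)^2)) - 2 * Cc k * α (k+1) := by
      linarith [hβrec k]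
    rw [hA (k+1), hB k, hb', hA k]
    field_simp
    ring
  -- norm expansion of the decrease term
  have hNexp : ‖((1 - L^2*(β k)^2 - α k)/((1 - α k) * s)) • F (z (k+1))
        - s • F (zh k)‖^2
      = ((1 - L^2*(β k)^2 - α k)/((1 - α k) * s))^2 * ‖F (z (k+1))‖^2
        - 2 * (((1 - L^2*(β k)^2 - α k)/((1 - α k) * s)) * s)
            * ⟪F (z (k+1)), F (zh k)⟫
        + s^2 * ‖F (zh k)‖^2 := by
    rw [norm_sub_sq_real, norm_smul, norm_smul, real_inner_smul_left,
      real_inner_smul_right, mul_pow, mul_pow, Real.norm_eq_abs, Real.norm_eq_abs,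
      sq_abs, sq_abs]
    ring
  have hcs : ((1 - L^2*(β k)^2 - α k)/((1 - α k) * s)) * s
      = (1 - L^2*(β k)^2 - α k)/(1 - α k) := by
    field_simp
  have hc2 : ((1 - L^2*(β k)^2 - α k)/((1 - α k) * s))^2
      = (1 - L^2*(β k)^2 - α k)^2/((1 - α k)^2 * (1 - L^2*(β k)^2)) := by
    rw [div_pow, mul_pow, hs2]
  -- the exact scalar identity for the final bound
  have hident : (A k * ((1 - L^2*(β k)^2) - (α k)^2)
        / (2*(1 - α k)^2*(1 - L^2*(β k)^2))) * ‖F (z (k+1))‖^2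
      - B (k+1) * β k * ⟪F (z (k+1)), F (zh k)⟫
      - A k * ⟪F (z (k+1)), F (zh k)⟫
      + (A k/2) * ‖F (zh k)‖^2
      - (A k/(2*L^2*(β k)^2)) * (‖F (z (k+1))‖^2
          - 2 * ⟪F (z (k+1)), F (zh k)⟫ + ‖F (zh k)‖^2)
      = -(A k/(2*L^2*(β k)^2)) *
          ((1 - L^2*(β k)^2 - α k)^2/((1 - α k)^2 * (1 - L^2*(β k)^2))
              * ‖F (z (k+1))‖^2
            - 2 * ((1 - L^2*(β k)^2 - α k)/(1 - α k)) * ⟪F (z (k+1)), F (zh k)⟫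
            + s^2 * ‖F (zh k)‖^2) := by
    have hBk : B k = A k * α k / β k := by
      rw [eq_div_iff hbne]; exact hBb
    rw [hs2, hB k, hBk]
    field_simp
    ring
  have hE0 : E k = (A k / 2) * ‖F (z k)‖^2 + B k * ⟪F (z k), z k - u k⟫ := hE k
  have hN := hNexp
  rw [hcs, hc2] at hN
  have h1 : E (k+1) - E k ≤
      -(A k/(2*L^2*(β k)^2)) *
        ‖((1 - L^2*(β k)^2 - α k)/((1 - α k) * s)) • F (z (k+1))
          - s • F (zh k)‖^2 := by
    calc E (k+1) - E k
        = (A k * ((1 - L^2*(β k)^2) - (α k)^2)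
            / (2*(1 - α k)^2*(1 - L^2*(β k)^2))) * ‖F (z (k+1))‖^2
          + (B k * ⟪F (z (k+1)), z k - u k⟫ - B k * ⟪F (z k), z k - u k⟫)
          - B (k+1) * β k * ⟪F (z (k+1)), F (zh k)⟫
          - (A k/2) * ‖F (z k)‖^2 := by
          rw [hEk1, hE0]
          linear_combination ‖F (z (k+1))‖^2 * hcoef
            + ⟪F (z (k+1)), z k - u k⟫ * hBk1
      _ ≤ (A k * ((1 - L^2*(β k)^2) - (α k)^2)
            / (2*(1 - α k)^2*(1 - L^2*(β k)^2))) * ‖F (z (k+1))‖^2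
          + (A k * ⟪F (z k), F (zh k)⟫ - A k * ⟪F (z (k+1)), F (zh k)⟫)
          - B (k+1) * β k * ⟪F (z (k+1)), F (zh k)⟫
          - (A k/2) * ‖F (z k)‖^2 := by linarith [hstepA]
      _ ≤ (A k * ((1 - L^2*(β k)^2) - (α k)^2)
            / (2*(1 - α k)^2*(1 - L^2*(β k)^2))) * ‖F (z (k+1))‖^2
          - B (k+1) * β k * ⟪F (z (k+1)), F (zh k)⟫
          - A k * ⟪F (z (k+1)), F (zh k)⟫
          + (A k/2) * ‖F (zh k)‖^2
          - (A k/(2*L^2*(β k)^2)) * (‖F (z (k+1))‖^2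
              - 2 * ⟪F (z (k+1)), F (zh k)⟫ + ‖F (zh k)‖^2) := by
          linarith [hstepB]
      _ = -(A k/(2*L^2*(β k)^2)) *
          ‖((1 - L^2*(β k)^2 - α k)/((1 - α k) * s)) • F (z (k+1))
            - s • F (zh k)‖^2 := by
          rw [hN]
          linear_combination hident
  have h2 : -(A k/(2*L^2*(β k)^2)) *
      ‖((1 - L^2*(β k)^2 - α k)/((1 - α k) * s)) • F (z (k+1))
        - s • F (zh k)‖^2 ≤ 0 := by
    rw [neg_mul]
    exact neg_nonpos_of_nonneg (mul_nonneg hm.le (sq_nonneg _))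
  exact ⟨h1, h2, by linarith [h1.trans h2]⟩
end

section
/- Let L > 0, r > 1, and consider the real recursion β_{k+1} = β_k − (1 + D)·L²β_k³ / (((k+r)² − 1)·(1 − L²β_k²)) with β_0 ∈ (0, 1/L) and −1 < D < r(r−1)(1 − L²β_0²)/((2r−1)·L²β_0²) − 1. Then the sequence (β_k) is non-increasing, satisfies β_k ≥ (1 − (2r−1)(1+D)·L²β_0² / (r(r−1)·(1 − L²β_0²)))·β_0 > 0 for all k, and its limit β_∞ = lim_{k→∞} β_k is strictly positive. -/
open Filter

set_option maxHeartbeats 1000000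

/-- The step-size recursion of the varying-step-size SEG method produces a non-increasing
sequence that is bounded below by a positive constant, hence has a positive limit. -/
theorem seg_stepsize_recursion
    (L r D : ℝ) (β : ℕ → ℝ)
    (hL : 0 < L) (hr : 1 < r)
    (hβ0 : β 0 ∈ Set.Ioo (0 : ℝ) (1/L))
    (hD1 : -1 < D)
    (hD2 : D < r*(r-1)*(1 - L^2*(β 0)^2)/((2*r-1)*L^2*(β 0)^2) - 1)
    (hrec : ∀ k : ℕ, β (k+1) = β k
        - (1 + D)*L^2*(β k)^3 / ((((k : ℝ) + r)^2 - 1)*(1 - L^2*(β k)^2))) :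
    (∀ k : ℕ, β (k+1) ≤ β k) ∧
    (∀ k : ℕ,
      (1 - (2*r-1)*(1+D)*L^2*(β 0)^2/(r*(r-1)*(1 - L^2*(β 0)^2))) * β 0 ≤ β k) ∧
    (0 < (1 - (2*r-1)*(1+D)*L^2*(β 0)^2/(r*(r-1)*(1 - L^2*(β 0)^2))) * β 0) ∧
    (∃ βinf : ℝ, 0 < βinf ∧ Tendsto β atTop (nhds βinf)) := by
  obtain ⟨hb0, hb1⟩ := hβ0
  have hLb : L * β 0 < 1 := by
    rw [lt_div_iff₀ hL] at hb1
    nlinarith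
  have h1 : 0 < 1 - L^2*(β 0)^2 := by
    nlinarith [mul_pos (sub_pos.mpr hLb) (show (0:ℝ) < 1 + L*β 0 by positivity)]
  have hD : 0 < 1 + D := by linarith
  have hr1 : 0 < r - 1 := by linarith
  have hr0 : 0 < r := by linarith
  have h2r : 0 < 2*r - 1 := by linarith
  set M : ℝ := (1+D)*L^2*(β 0)^3/(1 - L^2*(β 0)^2) with hMdef
  have hMpos : 0 < M := by
    apply div_pos _ h1
    positivity
  set c : ℝ := 1 - (2*r-1)*(1+D)*L^2*(β 0)^2/(r*(r-1)*(1 - L^2*(β 0)^2)) with hcdef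
  have hBpos : 0 < r*(r-1)*(1 - L^2*(β 0)^2) := by positivity
  have hkey : (2*r-1)*(1+D)*(L^2*(β 0)^2) < r*(r-1)*(1 - L^2*(β 0)^2) := by
    have hden : 0 < (2*r-1)*L^2*(β 0)^2 := by positivity
    have h1D : 1 + D < r*(r-1)*(1 - L^2*(β 0)^2)/((2*r-1)*L^2*(β 0)^2) := by linarith
    have := (lt_div_iff₀ hden).mp h1D
    nlinarith
  have hc : 0 < c := by
    rw [hcdef, sub_pos, div_lt_one hBpos]
    nlinarith
  have hcβ : c * β 0 = β 0 - (2*r-1)/(r*(r-1)) * M := by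
    rw [hcdef, hMdef]
    field_simp
  -- c * β 0 is below the quantitative lower bound
  have hglb : ∀ k : ℕ, c * β 0 ≤ β 0 - M*(1/(r-1) - 1/((k:ℝ)+r-1)) := by
    intro k
    rw [hcβ]
    have hk : 0 < (k:ℝ)+r-1 := by
      have : (0:ℝ) ≤ (k:ℝ) := Nat.cast_nonneg k
      linarith
    have e1 : 1/(r-1) ≤ (2*r-1)/(r*(r-1)) := by
      rw [div_le_div_iff₀ hr1 (by positivity)]
      nlinarith
    have e2 : 0 < 1/((k:ℝ)+r-1) := by positivity
    nlinarith
  -- the main invariant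
  have key : ∀ k : ℕ, β k ≤ β 0 ∧ β 0 - M*(1/(r-1) - 1/((k:ℝ)+r-1)) ≤ β k := by
    intro k
    induction k with
    | zero =>
      refine ⟨le_refl _, ?_⟩
      have : ((0:ℕ):ℝ)+r-1 = r-1 := by push_cast; ring
      rw [this, sub_self, mul_zero, sub_zero]
    | succ k ih =>
      obtain ⟨ihu, ihl⟩ := ih
      have hβk : 0 < β k := lt_of_lt_of_le (by positivity) (le_trans (hglb k) ihl)
      have hK1 : 1 < (k:ℝ)+r := by
        have : (0:ℝ) ≤ (k:ℝ) := Nat.cast_nonneg k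
        linarith
      have hq : L^2*(β k)^2 ≤ L^2*(β 0)^2 :=
        mul_le_mul_of_nonneg_left (pow_le_pow_left₀ hβk.le ihu 2) (sq_nonneg L)
      have hbk2 : 0 < 1 - L^2*(β k)^2 := by linarith
      have hK2 : 0 < ((k:ℝ)+r)^2 - 1 := by nlinarith
      have hdenpos : 0 < (((k:ℝ)+r)^2 - 1)*(1 - L^2*(β k)^2) := mul_pos hK2 hbk2
      have hdec0 : 0 ≤ (1 + D)*L^2*(β k)^3 / ((((k : ℝ) + r)^2 - 1)*(1 - L^2*(β k)^2)) := by
        apply div_nonneg _ hdenpos.le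
        positivity
      have hM1 : M * (1/((k:ℝ)+r-1) - 1/((k:ℝ)+r)) =
          (1+D)*L^2*(β 0)^3 / ((((k:ℝ)+r-1)*((k:ℝ)+r))*(1 - L^2*(β 0)^2)) := by
        rw [hMdef]
        have hk1 : ((k:ℝ)+r-1) ≠ 0 := ne_of_gt (by linarith)
        have hk2 : ((k:ℝ)+r) ≠ 0 := ne_of_gt (by linarith)
        field_simp
        ring
      have hdle : (1 + D)*L^2*(β k)^3 / ((((k : ℝ) + r)^2 - 1)*(1 - L^2*(β k)^2)) ≤
          M * (1/((k:ℝ)+r-1) - 1/((k:ℝ)+r)) := by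
        rw [hM1]
        apply div_le_div₀ (by positivity) _ _ _
        · have h3 : (β k)^3 ≤ (β 0)^3 := pow_le_pow_left₀ hβk.le ihu 3
          exact mul_le_mul_of_nonneg_left h3 (by positivity)
        · have : 0 < ((k:ℝ)+r-1) := by linarith
          positivity
        · nlinarith
      constructor
      · rw [hrec k]; linarith
      · rw [hrec k]
        have hcast : ((k+1:ℕ):ℝ)+r-1 = (k:ℝ)+r := by push_cast; ring
        rw [hcast]
        linarith
  have hstep : ∀ k : ℕ, β (k+1) ≤ β k := by
    intro k
    obtain ⟨ihu, ihl⟩ := key k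
    have hβk : 0 < β k := lt_of_lt_of_le (by positivity) (le_trans (hglb k) ihl)
    have hK1 : 1 < (k:ℝ)+r := by
      have : (0:ℝ) ≤ (k:ℝ) := Nat.cast_nonneg k
      linarith
    have hq : L^2*(β k)^2 ≤ L^2*(β 0)^2 :=
      mul_le_mul_of_nonneg_left (pow_le_pow_left₀ hβk.le ihu 2) (sq_nonneg L)
    have hbk2 : 0 < 1 - L^2*(β k)^2 := by linarith
    have hK2 : 0 < ((k:ℝ)+r)^2 - 1 := by nlinarith
    have hdec0 : 0 ≤ (1 + D)*L^2*(β k)^3 / ((((k : ℝ) + r)^2 - 1)*(1 - L^2*(β k)^2)) := by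
      apply div_nonneg _ (mul_pos hK2 hbk2).le
      positivity
    rw [hrec k]; linarith
  have hlow : ∀ k : ℕ, c * β 0 ≤ β k := fun k => le_trans (hglb k) (key k).2
  refine ⟨hstep, hlow, mul_pos hc hb0, ?_⟩
  have hanti : Antitone β := antitone_nat_of_succ_le hstep
  have hbdd : BddBelow (Set.range β) := by
    refine ⟨c * β 0, ?_⟩
    rintro x ⟨k, rfl⟩
    exact hlow k
  refine ⟨⨅ k, β k, ?_, tendsto_atTop_ciInf hanti hbdd⟩
  exact lt_of_lt_of_le (mul_pos hc hb0) (le_ciInf hlow)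
end

section
/- Let (a_k)_{k≥0} be a non-negative real sequence, r > 1, and E₁, E₂ > 0 with E₁ < r² − 1. If (1 − E₁/((k+r)² − 1))·a_{k+1} ≤ (E₂/((k+r−1)(k+r)))·a_0 + a_k for all integers k ≥ 0, then there exists a constant E₃ > 0, depending only on E₁, E₂ and r, such that a_k ≤ E₃·a_0 for all k ≥ 1. One may take E₃ = E₄·E₂·∑_{i=0}^∞ (i+r+1)/(((i+r)² − 1 − E₁)·(i+r)) with E₄ = ∏_{j=0}^∞ ((j+r)² − 1)/((j+r)² − 1 − E₁). -/
/-!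
Dividing the hypothesis by `1 - E₁/((k+r)² - 1)` gives
`a (k+1) ≤ (1 + x k) * (e k * a 0 + a k)` with `x k = E₁/((k+r)² - 1 - E₁)` and
`e k = E₂/((k+r-1)(k+r))`. Both are dominated by telescoping terms `C/((k+s)(k+s+1))`, so their
partial sums are bounded, and the discrete Grönwall inequality bounds `a k` by
`(a 0 + ∑ (1 + x j) * e j * a 0) * exp (∑ x j)`.
-/

open Finset Real

theorem sum_range_div_mul_add_one_le {s C : ℝ} (hs : 0 < s) (hC : 0 ≤ C) (n : ℕ) :
    ∑ j ∈ range n, C / ((j + s) * (j + s + 1)) ≤ C / s := by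
  have htel : ∀ j : ℕ, C / ((j + s) * (j + s + 1)) = C / (j + s) - C / ((j + 1 : ℕ) + s) := by
    intro j
    have : (0 : ℝ) < j + s := by positivity
    push_cast
    field_simp
    ring
  simp_rw [htel, sum_range_sub' (fun j : ℕ => C / (j + s)), Nat.cast_zero, zero_add]
  have : 0 ≤ C / (n + s) := by positivity
  linarith

theorem sum_range_div_sub_one_mul_le {r C : ℝ} (hr : 1 < r) (hC : 0 ≤ C) (n : ℕ) :
    ∑ k ∈ range n, C / (((k : ℝ) + r - 1) * ((k : ℝ) + r)) ≤ C / (r - 1) := by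
  convert sum_range_div_mul_add_one_le (sub_pos.mpr hr) hC n using 3
  ring

theorem exists_mul_add_one_le_sq_sub_one_sub {r E : ℝ} (hr : 1 < r) (hE : E < r ^ 2 - 1) :
    ∃ s > 0, ∀ t : ℝ, 0 ≤ t → (t + s) * (t + s + 1) ≤ (t + r) ^ 2 - 1 - E := by
  -- `s ≤ 1/2` handles the linear terms, `s ≤ (r² - 1 - E)/2` the constant ones
  refine ⟨min (1 / 2) ((r ^ 2 - 1 - E) / 2), by positivity, fun t ht => ?_⟩
  have h₁ := min_le_left (1 / 2 : ℝ) ((r ^ 2 - 1 - E) / 2)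
  have h₂ := min_le_right (1 / 2 : ℝ) ((r ^ 2 - 1 - E) / 2)
  have h₀ : 0 < min (1 / 2 : ℝ) ((r ^ 2 - 1 - E) / 2) := by positivity
  nlinarith

theorem exists_sum_range_div_sq_sub_one_sub_le {r E : ℝ} (hr : 1 < r) (hE₀ : 0 ≤ E)
    (hE : E < r ^ 2 - 1) :
    ∃ C, ∀ n, ∑ k ∈ range n, E / (((k : ℝ) + r) ^ 2 - 1 - E) ≤ C := by
  obtain ⟨s, hs, hs_le⟩ := exists_mul_add_one_le_sq_sub_one_sub hr hE
  refine ⟨E / s, fun n =>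
    (sum_le_sum fun k _ => ?_).trans (sum_range_div_mul_add_one_le hs hE₀ n)⟩
  have hk := hs_le k k.cast_nonneg
  exact div_le_div_of_nonneg_left hE₀ (by positivity) hk

theorem le_one_add_div_sub_mul {D E y z : ℝ} (hD : 0 < D) (hDE : 0 < D - E)
    (h : (1 - E / D) * y ≤ z) : y ≤ (1 + E / (D - E)) * z := by
  have hinv : (1 + E / (D - E)) * (1 - E / D) = 1 := by
    field_simp
    ring
  have hpos : 0 ≤ 1 + E / (D - E) := by
    rw [← div_self hDE.ne', ← add_div]
    exact div_nonneg (by linarith) hDE.le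
  calc y = (1 + E / (D - E)) * ((1 - E / D) * y) := by rw [← mul_assoc, hinv, one_mul]
    _ ≤ (1 + E / (D - E)) * z := mul_le_mul_of_nonneg_left h hpos

theorem discrete_gronwall_mul_initial {a x e : ℕ → ℝ} {X Sx Se : ℝ} (ha₀ : 0 ≤ a 0)
    (hx : ∀ k, 0 ≤ x k) (hxX : ∀ k, x k ≤ X) (hSx : ∀ n, ∑ k ∈ range n, x k ≤ Sx)
    (he : ∀ k, 0 ≤ e k) (hSe : ∀ n, ∑ k ∈ range n, e k ≤ Se)
    (hrec : ∀ k, a (k + 1) ≤ (1 + x k) * (e k * a 0 + a k)) (n : ℕ) :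
    a n ≤ (1 + (1 + X) * Se) * exp Sx * a 0 := by
  have hb : ∀ k, 0 ≤ (1 + x k) * e k * a 0 := fun k =>
    mul_nonneg (mul_nonneg (by linarith [hx k]) (he k)) ha₀
  have hgron := discrete_gronwall ha₀ (fun k _ => (hrec k).trans_eq (by ring))
    (fun k _ => hx k) (fun k _ => hb k) (Nat.zero_le n)
  have hb_sum : ∑ k ∈ range n, (1 + x k) * e k * a 0 ≤ (1 + X) * Se * a 0 := by
    rw [← sum_mul]
    refine mul_le_mul_of_nonneg_right ?_ ha₀
    calc ∑ k ∈ range n, (1 + x k) * e k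
        ≤ ∑ k ∈ range n, (1 + X) * e k := by gcongr with k; exacts [he k, hxX k]
      _ ≤ (1 + X) * Se := by
          rw [← mul_sum]
          exact mul_le_mul_of_nonneg_left (hSe n) (by linarith [hx 0, hxX 0])
  rw [← range_eq_Ico] at hgron
  calc a n ≤ _ := hgron
    _ ≤ (a 0 + (1 + X) * Se * a 0) * exp Sx := by
      gcongr
      · exact add_nonneg ha₀ ((sum_nonneg fun k _ => hb k).trans hb_sum)
      · exact hSx n
    _ = _ := by ring

/-- A non-negative real sequence satisfying the given recursive inequality is uniformly
bounded by a constant multiple of its initial value. -/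
theorem seq_uniform_bound
    (r E₁ E₂ : ℝ) (a : ℕ → ℝ)
    (hr : 1 < r) (hE₁ : 0 < E₁) (hE₂ : 0 < E₂) (hE₁' : E₁ < r^2 - 1)
    (ha : ∀ k : ℕ, 0 ≤ a k)
    (hrec : ∀ k : ℕ,
      (1 - E₁/(((k : ℝ) + r)^2 - 1)) * a (k+1)
        ≤ E₂/(((k : ℝ) + r - 1)*((k : ℝ) + r)) * a 0 + a k) :
    ∃ E₃ : ℝ, 0 < E₃ ∧ ∀ k : ℕ, 1 ≤ k → a k ≤ E₃ * a 0 := by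
  have hδ : 0 < r ^ 2 - 1 - E₁ := by linarith
  have hr₁ : 0 < r - 1 := by linarith
  have hden : ∀ k : ℕ, r ^ 2 - 1 - E₁ ≤ ((k : ℝ) + r) ^ 2 - 1 - E₁ := fun k => by
    nlinarith [(k.cast_nonneg : (0 : ℝ) ≤ k)]
  have he : ∀ k : ℕ, 0 ≤ E₂ / (((k : ℝ) + r - 1) * ((k : ℝ) + r)) := fun k => by
    have : (0 : ℝ) ≤ k := k.cast_nonneg
    exact div_nonneg hE₂.le (mul_nonneg (by linarith) (by linarith))
  have hstep := fun k : ℕ =>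
    le_one_add_div_sub_mul (by linarith [hden k]) (by linarith [hden k]) (hrec k)
  obtain ⟨Sx, hSx⟩ := exists_sum_range_div_sq_sub_one_sub_le hr hE₁.le hE₁'
  refine ⟨(1 + (1 + E₁ / (r ^ 2 - 1 - E₁)) * (E₂ / (r - 1))) * exp Sx, by positivity,
    fun k _ => discrete_gronwall_mul_initial (ha 0)
      (fun j => div_nonneg hE₁.le (hδ.trans_le (hden j)).le)
      (fun j => div_le_div_of_nonneg_left hE₁.le hδ (hden j)) hSx
      he (sum_range_div_sub_one_mul_le hr hE₂.le) hstep k⟩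
end
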